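/- arXiv:1607.01156 — 2 statements merged into one kernel-verified Lean document; each statement's English description precedes it below -/
import Mathlib

section
/- Let κ ≥ 0, β ∈ ℝ, and let (u,v) be a classical positive solution on ℝ² of β u_t - κ u_tt - u_xx = u(r_u - γ_u(u+v)) + μ(v - u), β v_t - κ v_tt - v_xx = v(r_v - γ_v(u+v)) + μ(u - v). Set α₀ := min(1, μ⁰/(2γ^∞), -λ₁^b/(2(1+2C^b)γ^∞)) > 0. If inf_{(t,x) ∈ ℝ×(-b,b)} min(u(t,x), v(t,x)) > 0, then u(t,x) ≥ α₀ φ^b(x) and v(t,x) ≥ α₀ ψ^b(x) for all (t,x) ∈ ℝ×(-b,b). -/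
open Set Filter Real Topology

set_option maxHeartbeats 1000000

noncomputable def pdt (u : ℝ → ℝ → ℝ) (t x : ℝ) : ℝ := deriv (fun t' => u t' x) t
noncomputable def pdtt (u : ℝ → ℝ → ℝ) (t x : ℝ) : ℝ := deriv (deriv (fun t' => u t' x)) t
noncomputable def pdxx (u : ℝ → ℝ → ℝ) (t x : ℝ) : ℝ := deriv (deriv (u t)) x




lemma gb_deriv : ∀ s : ℝ, HasDerivAt (fun s => Real.log (Real.cosh s)) (Real.sinh s / Real.cosh s) s :=
  fun s => (Real.hasDerivAt_cosh s).log (Real.cosh_pos s).ne'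

lemma glem (σ t₁ : ℝ) (hσ : 0 ≤ σ) :
    Differentiable ℝ (fun t => σ * Real.log (Real.cosh (t - t₁))) ∧
    Differentiable ℝ (deriv (fun t => σ * Real.log (Real.cosh (t - t₁)))) ∧
    (∀ t, |deriv (fun t => σ * Real.log (Real.cosh (t - t₁))) t| ≤ σ) ∧
    (∀ t, 0 ≤ deriv (deriv (fun t => σ * Real.log (Real.cosh (t - t₁)))) t ∧
          deriv (deriv (fun t => σ * Real.log (Real.cosh (t - t₁)))) t ≤ σ) ∧
    (∀ t, 0 ≤ σ * Real.log (Real.cosh (t - t₁))) ∧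
    (σ * Real.log (Real.cosh (t₁ - t₁)) = 0) ∧
    (∀ t, σ * (|t - t₁| - Real.log 2) ≤ σ * Real.log (Real.cosh (t - t₁))) ∧
    Continuous (fun t => σ * Real.log (Real.cosh (t - t₁))) := by
  set g := fun t => σ * Real.log (Real.cosh (t - t₁)) with hg
  have hd : ∀ t, HasDerivAt g (σ * (Real.sinh (t - t₁) / Real.cosh (t - t₁))) t := by
    intro t
    have h1 : HasDerivAt (fun t : ℝ => t - t₁) 1 t := (hasDerivAt_id t).sub_const t₁
    have := ((gb_deriv (t - t₁)).comp t h1).const_mul σ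
    simpa using this
  have hderiv : deriv g = fun t => σ * (Real.sinh (t - t₁) / Real.cosh (t - t₁)) :=
    funext fun t => (hd t).deriv
  have hd2 : ∀ t, HasDerivAt (deriv g) (σ * (1 / Real.cosh (t - t₁) ^ 2)) t := by
    intro t
    rw [hderiv]
    have h1 : HasDerivAt (fun t : ℝ => t - t₁) 1 t := (hasDerivAt_id t).sub_const t₁
    have hq : HasDerivAt (fun s => Real.sinh s / Real.cosh s)
        ((Real.cosh (t - t₁) * Real.cosh (t - t₁) - Real.sinh (t - t₁) * Real.sinh (t - t₁)) /
          Real.cosh (t - t₁) ^ 2) (t - t₁) :=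
      (Real.hasDerivAt_sinh _).div (Real.hasDerivAt_cosh _) (Real.cosh_pos _).ne'
    have heq : (Real.cosh (t - t₁) * Real.cosh (t - t₁) - Real.sinh (t - t₁) * Real.sinh (t - t₁)) /
          Real.cosh (t - t₁) ^ 2 = 1 / Real.cosh (t - t₁) ^ 2 := by
      rw [show Real.cosh (t - t₁) * Real.cosh (t - t₁) - Real.sinh (t - t₁) * Real.sinh (t - t₁)
          = Real.cosh (t - t₁) ^ 2 - Real.sinh (t - t₁) ^ 2 by ring, Real.cosh_sq_sub_sinh_sq]
    rw [heq] at hq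
    have := ((hq.comp t h1).const_mul σ)
    simpa using this
  have habs : ∀ s : ℝ, |Real.sinh s| ≤ Real.cosh s := by
    intro s
    have h1 := Real.cosh_sq_sub_sinh_sq s
    have h2 := Real.cosh_pos s
    nlinarith [sq_abs (Real.sinh s), abs_nonneg (Real.sinh s)]
  refine ⟨fun t => (hd t).differentiableAt, fun t => (hd2 t).differentiableAt, ?_, ?_, ?_, ?_, ?_, ?_⟩
  · intro t
    rw [hderiv, abs_mul, abs_of_nonneg hσ, abs_div, abs_of_pos (Real.cosh_pos _)]
    calc σ * (|Real.sinh (t - t₁)| / Real.cosh (t - t₁)) ≤ σ * 1 := by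
          apply mul_le_mul_of_nonneg_left _ hσ
          rw [div_le_one (Real.cosh_pos _)]; exact habs _
      _ = σ := mul_one σ
  · intro t
    rw [(hd2 t).deriv]
    have h1 := Real.one_le_cosh (t - t₁)
    have h2 := Real.cosh_pos (t - t₁)
    constructor
    · positivity
    · calc σ * (1 / Real.cosh (t - t₁) ^ 2) ≤ σ * 1 := by
            apply mul_le_mul_of_nonneg_left _ hσ
            rw [div_le_one (by positivity)]; nlinarith
        _ = σ := mul_one σ
  · intro t
    have : (0:ℝ) ≤ Real.log (Real.cosh (t - t₁)) := Real.log_nonneg (Real.one_le_cosh _)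
    positivity
  · simp [Real.cosh_zero]
  · intro t
    apply mul_le_mul_of_nonneg_left _ hσ
    have hch : Real.exp |t - t₁| / 2 ≤ Real.cosh (t - t₁) := by
      rw [Real.cosh_eq]
      rcases abs_cases (t - t₁) with ⟨h, _⟩ | ⟨h, _⟩ <;> rw [h] <;>
        [skip; rw [show -(t-t₁) = -(t-t₁) from rfl]] <;>
        nlinarith [Real.exp_pos (t - t₁), Real.exp_pos (-(t - t₁))]
    calc |t - t₁| - Real.log 2 = Real.log (Real.exp |t - t₁| / 2) := by
          rw [Real.log_div (Real.exp_ne_zero _) two_ne_zero, Real.log_exp]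
      _ ≤ Real.log (Real.cosh (t - t₁)) :=
          Real.log_le_log (by positivity) hch
  · exact continuous_const.mul ((Real.continuous_cosh.comp (continuous_id.sub continuous_const)).log
      (fun t => (Real.cosh_pos _).ne'))

lemma per_bound {f : ℝ → ℝ} {L : ℝ} (hL : 0 < L) (hf : Continuous f)
    (hper : ∀ x, f (x + L) = f x) : ∃ M, 0 < M ∧ ∀ x, |f x| ≤ M := by
  have hper' : Function.Periodic f L := hper
  have himg : f '' Icc 0 (0 + L) = Set.range f := hper'.image_Icc hL 0
  have hcomp : IsCompact (f '' Icc 0 (0 + L)) :=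
    (isCompact_Icc).image hf
  rw [himg] at hcomp
  obtain ⟨M, hM⟩ := hcomp.isBounded.subset_ball 0
  refine ⟨|M| + 1, by positivity, fun x => ?_⟩
  have hx : f x ∈ Metric.ball (0:ℝ) M := hM ⟨x, rfl⟩
  simp only [Metric.mem_ball, Real.dist_eq, sub_zero] at hx
  calc |f x| ≤ M := hx.le
    _ ≤ |M| + 1 := by cases abs_cases M <;> linarith

lemma scalar_contra
    (UU VV Φ₀ Ψ₀ R₀ G₀ M₀ lam μ0 γ Mr δ ε σ α C : ℝ)
    (hlam : lam < 0) (hμ0 : 0 < μ0) (hγ : 0 < γ) (hMr : 0 < Mr) (hδ : 0 < δ)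
    (hε : 0 ≤ ε) (hσ : 0 ≤ σ) (hC : 0 ≤ C)
    (hα : 0 < α)
    (hA1 : γ * α ≤ μ0 / 2) (hA2 : 2 * (γ * α) ≤ -lam / 3)
    (hΦpos : 0 < Φ₀) (hΨpos : 0 < Ψ₀) (hΦ1 : Φ₀ ≤ 1) (hΨ1 : Ψ₀ ≤ 1)
    (hmlo : μ0 ≤ M₀) (hmhi : M₀ ≤ Mr) (hR : |R₀| ≤ Mr)
    (hG : 0 < G₀) (hGle : G₀ ≤ γ)
    (hU : 0 < UU) (hV : 0 < VV) (hUδ : δ ≤ UU)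
    (he_neg : UU - α * Φ₀ < 0) (he_low : -ε ≤ UU - α * Φ₀)
    (hd_low : UU - α * Φ₀ ≤ VV - α * Ψ₀)
    (key : UU * (R₀ - G₀ * (UU + VV)) + M₀ * (VV - UU)
        ≤ C * σ + α * ((R₀ - M₀) * Φ₀ + M₀ * Ψ₀ + lam * Φ₀))
    (hfinal : C * σ + 3 * Mr * ε < 2/3 * (-lam) * δ) : False := by
  have hR' : -Mr ≤ R₀ ∧ R₀ ≤ Mr := abs_le.mp hR
  have hεd : -ε ≤ VV - α * Ψ₀ := le_trans he_low hd_low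
  have hαΦ : 0 < α * Φ₀ := by positivity
  have hUle : UU ≤ α * Φ₀ := by linarith
  have hγαΦ : 0 ≤ γ * α * Φ₀ := by positivity
  have key2 : -(α*Φ₀)*(G₀*(UU+VV)) - α*lam*Φ₀ + (UU - α*Φ₀)*(R₀-M₀)
      - (UU - α*Φ₀)*(G₀*(UU+VV)) + M₀*(VV - α*Ψ₀) ≤ C*σ := by
    have hiden : -(α*Φ₀)*(G₀*(UU+VV)) - α*lam*Φ₀ + (UU - α*Φ₀)*(R₀-M₀)
        - (UU - α*Φ₀)*(G₀*(UU+VV)) + M₀*(VV - α*Ψ₀)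
        = (UU * (R₀ - G₀ * (UU + VV)) + M₀ * (VV - UU))
          - α * ((R₀ - M₀) * Φ₀ + M₀ * Ψ₀ + lam * Φ₀) := by ring
    linarith [key, hiden.ge, hiden.le]
  have h1 : (UU - α*Φ₀)*(R₀-M₀) ≥ -(2 * Mr) * ε := by
    rcases le_or_gt 0 (R₀ - M₀) with h | h
    · have p1 := mul_le_mul_of_nonneg_right he_low h
      have p2 : 0 ≤ ε * (2*Mr - (R₀ - M₀)) := mul_nonneg hε (by linarith [hR'.2])
      linarith [p1, p2]
    · have p1 : 0 ≤ (α*Φ₀ - UU) * (M₀ - R₀) :=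
        mul_nonneg (by linarith) (by linarith)
      have p2 : 0 ≤ 2 * Mr * ε := by positivity
      linarith [p1, p2]
  have h2 : -((UU - α*Φ₀)*(G₀*(UU+VV))) ≥ 0 := by
    have p1 : 0 ≤ (α*Φ₀ - UU) * (G₀*(UU+VV)) :=
      mul_nonneg (by linarith) (mul_nonneg hG.le (by linarith))
    linarith [p1]
  have hs1 : -(α*Φ₀)*(G₀*(UU+VV)) ≥ -(α*Φ₀)*(γ*(UU+VV)) := by
    have p1 : 0 ≤ (α*Φ₀) * ((γ - G₀) * (UU+VV)) :=
      mul_nonneg hαΦ.le (mul_nonneg (by linarith) (by linarith))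
    linarith [p1]
  have hs2 : -(α*Φ₀)*(γ*(UU+VV))
      ≥ -(γ*α*Φ₀*(α*Φ₀ + α*Ψ₀)) - γ*α*Φ₀*(VV - α*Ψ₀) := by
    have p1 : 0 ≤ (γ*α*Φ₀) * (α*Φ₀ - UU) := mul_nonneg hγαΦ (by linarith)
    linarith [p1]
  have hcoef2 : μ0 / 2 ≤ M₀ - γ*α*Φ₀ := by
    have p1 : γ*α*Φ₀ ≤ γ*α := by
      have := mul_nonneg (mul_pos hγ hα).le (by linarith : (0:ℝ) ≤ 1 - Φ₀)
      linarith [this]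
    linarith
  have hs3 : (M₀ - γ*α*Φ₀) * (VV - α*Ψ₀) ≥ -(Mr * ε) := by
    rcases le_or_gt 0 (VV - α*Ψ₀) with h | h
    · have p1 : 0 ≤ (M₀ - γ*α*Φ₀) * (VV - α*Ψ₀) := mul_nonneg (by linarith) h
      have p2 : 0 ≤ Mr * ε := by positivity
      linarith
    · have p1 : 0 ≤ (Mr - (M₀ - γ*α*Φ₀)) * (-(VV - α*Ψ₀)) :=
        mul_nonneg (by linarith) (by linarith)
      have p2 : 0 ≤ Mr * ((VV - α*Ψ₀) + ε) := mul_nonneg hMr.le (by linarith)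
      linarith [p1, p2]
  have h4 : -(α*Φ₀)*(G₀*(UU+VV)) + M₀*(VV - α*Ψ₀)
      ≥ -(γ*α*Φ₀*(α*Φ₀ + α*Ψ₀)) - Mr * ε := by linarith [hs1, hs2, hs3]
  have h5 : γ*α*Φ₀*(α*Φ₀ + α*Ψ₀) ≤ (α*Φ₀)*(-lam/3) := by
    have hb1 : γ*(α*Φ₀ + α*Ψ₀) ≤ -lam/3 := by
      have p1 : 0 ≤ (γ*α) * (2 - Φ₀ - Ψ₀) := mul_nonneg (mul_pos hγ hα).le (by linarith)
      linarith [p1]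
    have := mul_le_mul_of_nonneg_left hb1 hαΦ.le
    linarith [this]
  have hmul : δ * (-lam) ≤ (α*Φ₀) * (-lam) :=
    mul_le_mul_of_nonneg_right (le_trans hUδ hUle) (by linarith)
  linarith [key2, h1, h2, h4, h5, hmul, hfinal]

lemma c2diff {f : ℝ → ℝ} (hf : ContDiff ℝ 2 f) :
    Differentiable ℝ f ∧ Differentiable ℝ (deriv f) := by
  have h2 : ContDiff ℝ ((1 : ℕ) + 1) f := by norm_num at hf ⊢; exact hf
  rw [contDiff_succ_iff_deriv] at h2
  exact ⟨h2.1, h2.2.2.differentiable (by simp)⟩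

lemma slice_t (u : ℝ → ℝ → ℝ) (hu : ContDiff ℝ 2 (Function.uncurry u)) (x : ℝ) :
    ContDiff ℝ 2 (fun t => u t x) :=
  hu.comp (contDiff_id.prodMk contDiff_const)

lemma slice_x (u : ℝ → ℝ → ℝ) (hu : ContDiff ℝ 2 (Function.uncurry u)) (t : ℝ) :
    ContDiff ℝ 2 (u t) :=
  hu.comp (contDiff_const.prodMk contDiff_id)


lemma sdt_local {f : ℝ → ℝ} {a ρ : ℝ} (hρ : 0 < ρ)
    (hf : ∀ x ∈ Ioo (a - ρ) (a + ρ), DifferentiableAt ℝ f x)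
    (hf' : DifferentiableAt ℝ (deriv f) a)
    (h : IsLocalMin f a) : deriv f a = 0 ∧ 0 ≤ deriv (deriv f) a := by
  have h0 : deriv f a = 0 := h.deriv_eq_zero
  refine ⟨h0, ?_⟩
  by_contra hc
  push_neg at hc
  set c := deriv (deriv f) a with hcdef
  have hd : HasDerivAt (deriv f) c a := hf'.hasDerivAt
  have hslope := hasDerivAt_iff_tendsto_slope.mp hd
  have hev : ∀ᶠ x in 𝓝[>] a, slope (deriv f) a x < c / 2 := by
    have : ∀ᶠ x in 𝓝[≠] a, slope (deriv f) a x < c / 2 :=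
      hslope.eventually (Filter.Tendsto.eventually_lt_const (by linarith) tendsto_id)
    exact this.filter_mono (nhdsWithin_mono a fun x hx => ne_of_gt hx)
  obtain ⟨η, hη, hIoo⟩ := (mem_nhdsGT_iff_exists_Ioo_subset).mp hev
  obtain ⟨ε, hε, hball⟩ := Metric.mem_nhds_iff.mp h
  have hηa : a < η := hη
  set η' := min (min (η - a) ε) ρ / 2 with hη'def
  have hη'pos : 0 < η' := by
    have : 0 < min (min (η - a) ε) ρ := lt_min (lt_min (by linarith) hε) hρ
    positivity
  have hη'lt1 : a + η' < η := by
    have h1 := min_le_left (min (η - a) ε) ρ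
    have h2 := min_le_left (η - a) ε
    simp only [hη'def]; linarith
  have hη'lt2 : η' < ε := by
    have h1 := min_le_left (min (η - a) ε) ρ
    have h2 := min_le_right (η - a) ε
    simp only [hη'def]; linarith
  have hη'lt3 : η' < ρ := by
    have h1 := min_le_right (min (η - a) ε) ρ
    simp only [hη'def]; linarith
  have hsub : Icc a (a + η') ⊆ Ioo (a - ρ) (a + ρ) := fun x hx =>
    ⟨by linarith [hx.1], by linarith [hx.2]⟩
  have hanti : StrictAntiOn f (Icc a (a + η')) := by
    apply strictAntiOn_of_deriv_neg (convex_Icc _ _)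
      (fun x hx => ((hf x (hsub hx)).continuousAt).continuousWithinAt)
    intro x hx
    rw [interior_Icc] at hx
    have hxI : x ∈ Ioo a η := ⟨hx.1, lt_trans hx.2 hη'lt1⟩
    have hs := hIoo hxI
    have hxa : 0 < x - a := by linarith [hx.1]
    have heq : slope (deriv f) a x = deriv f x / (x - a) := by
      rw [slope_def_field, h0]; ring
    simp only [mem_setOf_eq, heq] at hs
    have h3 := (div_lt_iff₀ hxa).mp hs
    nlinarith
  have h1 : f (a + η') < f a :=
    hanti (left_mem_Icc.mpr (by linarith)) (right_mem_Icc.mpr (by linarith)) (by linarith)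
  have h2 : f a ≤ f (a + η') := by
    apply hball
    simp [Real.dist_eq, abs_of_pos hη'pos, hη'lt2]
  linarith

lemma contact
    (b lam1b σ α' κ β t₁ T t₀ x₀ : ℝ)
    (U V : ℝ → ℝ → ℝ) (Φ Ψ R G m : ℝ → ℝ)
    (hκ : 0 ≤ κ) (hα' : 0 ≤ α')
    (hU_reg : ContDiff ℝ 2 (Function.uncurry U))
    (hΦ_reg : ContDiffOn ℝ 2 Φ (Ioo (-b) b))
    (hx₀ : x₀ ∈ Ioo (-b) b)
    (ht₀ : t₀ ∈ Ioo (t₁ - T) (t₁ + T))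
    (hPDE : β * pdt U t₀ x₀ - κ * pdtt U t₀ x₀ - pdxx U t₀ x₀
        = U t₀ x₀ * (R x₀ - G x₀ * (U t₀ x₀ + V t₀ x₀)) + m x₀ * (V t₀ x₀ - U t₀ x₀))
    (heig : -(deriv (deriv Φ) x₀) - (R x₀ - m x₀) * Φ x₀ - m x₀ * Ψ x₀ = lam1b * Φ x₀)
    (g : ℝ → ℝ)
    (hg1 : Differentiable ℝ g) (hg2 : Differentiable ℝ (deriv g))
    (hg' : ∀ t, |deriv g t| ≤ σ)
    (hg'' : ∀ t, 0 ≤ deriv (deriv g) t ∧ deriv (deriv g) t ≤ σ)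
    (hmin : IsMinOn (fun p : ℝ × ℝ => U p.1 p.2 - α' * Φ p.2 + g p.1)
        (Icc (t₁ - T) (t₁ + T) ×ˢ Icc (-b) b) (t₀, x₀)) :
    U t₀ x₀ * (R x₀ - G x₀ * (U t₀ x₀ + V t₀ x₀)) + m x₀ * (V t₀ x₀ - U t₀ x₀)
      ≤ (|β| + κ) * σ + α' * ((R x₀ - m x₀) * Φ x₀ + m x₀ * Ψ x₀ + lam1b * Φ x₀) := by
  have hmin' := isMinOn_iff.mp hmin
  have hσ : 0 ≤ σ := le_trans (abs_nonneg _) (hg' 0)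
  -- t-slice
  obtain ⟨hft1, hft2⟩ := c2diff (slice_t U hU_reg x₀)
  set Ft := fun t => U t x₀ - α' * Φ x₀ + g t with hFtdef
  have hFtmin : IsLocalMin Ft t₀ := by
    apply Filter.eventually_of_mem (Icc_mem_nhds ht₀.1 ht₀.2)
    intro t ht
    exact hmin' (t, x₀) ⟨ht, ⟨hx₀.1.le, hx₀.2.le⟩⟩
  have hFt_at : ∀ t, HasDerivAt Ft (deriv (fun t' => U t' x₀) t + deriv g t) t := by
    intro t
    exact (((hft1 t).hasDerivAt).sub_const (α' * Φ x₀)).add (hg1 t).hasDerivAt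
  have hFt_d1 : deriv Ft = fun t => deriv (fun t' => U t' x₀) t + deriv g t :=
    funext fun t => (hFt_at t).deriv
  have hFt_diff2 : DifferentiableAt ℝ (deriv Ft) t₀ := by
    rw [hFt_d1]; exact (hft2 t₀).add (hg2 t₀)
  obtain ⟨hz, hnn⟩ := sdt_local one_pos (fun x _ => (hFt_at x).differentiableAt) hFt_diff2 hFtmin
  have E1 : pdt U t₀ x₀ = -deriv g t₀ := by
    have := hFt_d1 ▸ hz
    simp only at this
    unfold pdt
    linarith
  have E2 : 0 ≤ pdtt U t₀ x₀ + deriv (deriv g) t₀ := by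
    have hcalc : deriv (deriv Ft) t₀
        = deriv (deriv (fun t' => U t' x₀)) t₀ + deriv (deriv g) t₀ := by
      rw [hFt_d1]
      exact (((hft2 t₀).hasDerivAt).add ((hg2 t₀).hasDerivAt)).deriv
    rw [hcalc] at hnn
    exact hnn
  -- x-slice
  obtain ⟨hfx1, hfx2⟩ := c2diff (slice_x U hU_reg t₀)
  set Fx := fun x => U t₀ x - α' * Φ x with hFxdef
  have hIoo_nhds : Ioo (-b) b ∈ 𝓝 x₀ := isOpen_Ioo.mem_nhds hx₀
  have hFxmin : IsLocalMin Fx x₀ := by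
    apply Filter.eventually_of_mem (Icc_mem_nhds hx₀.1 hx₀.2)
    intro x hx
    have := hmin' (t₀, x) ⟨⟨ht₀.1.le, ht₀.2.le⟩, hx⟩
    simp only [hFxdef] at this ⊢
    linarith
  have hΦ_at : ∀ x ∈ Ioo (-b) b, DifferentiableAt ℝ Φ x := fun x hx =>
    (hΦ_reg.differentiableOn (by norm_num)).differentiableAt (isOpen_Ioo.mem_nhds hx)
  have hΦ2 : ContDiffOn ℝ 1 (deriv Φ) (Ioo (-b) b) := by
    have h2 : ContDiffOn ℝ ((1 : ℕ) + 1) Φ (Ioo (-b) b) := by norm_num at hΦ_reg ⊢; exact hΦ_reg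
    exact ((contDiffOn_succ_iff_deriv_of_isOpen isOpen_Ioo).mp h2).2.2
  have hΦ'diffAt : DifferentiableAt ℝ (deriv Φ) x₀ :=
    (hΦ2.differentiableOn (by simp)).differentiableAt hIoo_nhds
  have hFx_at : ∀ x ∈ Ioo (-b) b,
      HasDerivAt Fx (deriv (U t₀) x - α' * deriv Φ x) x := fun x hx =>
    ((hfx1 x).hasDerivAt).sub (((hΦ_at x hx).hasDerivAt).const_mul α')
  have hFx_ev : deriv Fx =ᶠ[𝓝 x₀] fun x => deriv (U t₀) x - α' * deriv Φ x :=
    Filter.eventually_of_mem hIoo_nhds (fun x hx => (hFx_at x hx).deriv)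
  have hRHS_at : HasDerivAt (fun x => deriv (U t₀) x - α' * deriv Φ x)
      (deriv (deriv (U t₀)) x₀ - α' * deriv (deriv Φ) x₀) x₀ :=
    ((hfx2 x₀).hasDerivAt).sub ((hΦ'diffAt.hasDerivAt).const_mul α')
  have hFx_diff2 : DifferentiableAt ℝ (deriv Fx) x₀ :=
    (hFx_ev.differentiableAt_iff).mpr hRHS_at.differentiableAt
  set ρ := min (x₀ + b) (b - x₀) with hρdef
  have hρ : 0 < ρ := lt_min (by linarith [hx₀.1]) (by linarith [hx₀.2])
  have hsubρ : Ioo (x₀ - ρ) (x₀ + ρ) ⊆ Ioo (-b) b := by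
    intro x hx
    have h1 := min_le_left (x₀ + b) (b - x₀)
    have h2 := min_le_right (x₀ + b) (b - x₀)
    constructor <;> simp only [hρdef] at hx <;> [linarith [hx.1]; linarith [hx.2]]
  obtain ⟨_, hnnx⟩ := sdt_local hρ
    (fun x hx => (hFx_at x (hsubρ hx)).differentiableAt) hFx_diff2 hFxmin
  have E3 : α' * deriv (deriv Φ) x₀ ≤ pdxx U t₀ x₀ := by
    have hcalc : deriv (deriv Fx) x₀ = deriv (deriv (U t₀)) x₀ - α' * deriv (deriv Φ) x₀ := by
      rw [hFx_ev.deriv_eq]; exact hRHS_at.deriv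
    rw [hcalc] at hnnx
    unfold pdxx
    linarith
  -- combine
  have hb1 : β * pdt U t₀ x₀ ≤ |β| * σ := by
    rw [E1]
    have h1 : β * -deriv g t₀ ≤ |β * -deriv g t₀| := le_abs_self _
    rw [abs_mul, abs_neg] at h1
    have h2 := mul_le_mul_of_nonneg_left (hg' t₀) (abs_nonneg β)
    linarith
  have hb2 : -(κ * pdtt U t₀ x₀) ≤ κ * σ := by
    have h3 : -pdtt U t₀ x₀ ≤ σ := by linarith [E2, (hg'' t₀).2]
    have h2 := mul_le_mul_of_nonneg_left h3 hκ
    nlinarith [h2]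
  have heig2 : -(α' * deriv (deriv Φ) x₀)
      = α' * ((R x₀ - m x₀) * Φ x₀ + m x₀ * Ψ x₀ + lam1b * Φ x₀) := by
    linear_combination α' * heig
  linarith [hPDE.ge, hPDE.le, hb1, hb2, E3, heig2.ge, heig2.le]

/-- a uniform lower estimate in `(-b,b)` for positive entire solutions. -/
theorem stmt15
    (L : ℝ) (hL : 0 < L)
    (ru rv γu γv μ : ℝ → ℝ)
    (hru : ContDiff ℝ (⊤ : ℕ∞) ru) (hrv : ContDiff ℝ (⊤ : ℕ∞) rv)
    (hγu : ContDiff ℝ (⊤ : ℕ∞) γu) (hγv : ContDiff ℝ (⊤ : ℕ∞) γv) (hμ : ContDiff ℝ (⊤ : ℕ∞) μ)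
    (hru_per : ∀ x, ru (x + L) = ru x) (hrv_per : ∀ x, rv (x + L) = rv x)
    (hγu_per : ∀ x, γu (x + L) = γu x) (hγv_per : ∀ x, γv (x + L) = γv x)
    (hμ_per : ∀ x, μ (x + L) = μ x)
    (hγu_pos : ∀ x, 0 < γu x) (hγv_pos : ∀ x, 0 < γv x) (hμ_pos : ∀ x, 0 < μ x)
    -- bounds on the coefficients
    (μ0 γinfty : ℝ) (hμ0 : 0 < μ0) (hμ0_le : ∀ x, μ0 ≤ μ x)
    (hγ_le : ∀ x, γu x ≤ γinfty ∧ γv x ≤ γinfty)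
    -- the Dirichlet principal eigenpair on (-b,b)
    (b : ℝ) (hb : 0 < b)
    (lam1b : ℝ) (hlam1b : lam1b < 0)
    (φb ψb : ℝ → ℝ)
    (hφb_cont : ContinuousOn φb (Icc (-b) b)) (hψb_cont : ContinuousOn ψb (Icc (-b) b))
    (hφb_reg : ContDiffOn ℝ 2 φb (Ioo (-b) b)) (hψb_reg : ContDiffOn ℝ 2 ψb (Ioo (-b) b))
    (hφb_pos : ∀ x ∈ Ioo (-b) b, 0 < φb x) (hψb_pos : ∀ x ∈ Ioo (-b) b, 0 < ψb x)
    (hφb_bc : φb (-b) = 0 ∧ φb b = 0) (hψb_bc : ψb (-b) = 0 ∧ ψb b = 0)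
    (hΦb_norm : max (sSup (φb '' Icc (-b) b)) (sSup (ψb '' Icc (-b) b)) = 1)
    (hφb_eq : ∀ x ∈ Ioo (-b) b,
      -(deriv (deriv φb) x) - (ru x - μ x) * φb x - μ x * ψb x = lam1b * φb x)
    (hψb_eq : ∀ x ∈ Ioo (-b) b,
      -(deriv (deriv ψb) x) - (rv x - μ x) * ψb x - μ x * φb x = lam1b * ψb x)
    -- C^b is the (finite) supremum of the ratios of the eigenfunctions
    (Cb : ℝ)
    (hCb : IsLUB {r : ℝ | ∃ x ∈ Ioo (-b) b, r = max (φb x / ψb x) (ψb x / φb x)} Cb)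
    -- the entire solution
    (κ β : ℝ) (hκ : 0 ≤ κ)
    (u v : ℝ → ℝ → ℝ)
    (hu_reg : ContDiff ℝ 2 (Function.uncurry u)) (hv_reg : ContDiff ℝ 2 (Function.uncurry v))
    (h_pos : ∀ t x, 0 < u t x ∧ 0 < v t x)
    (hu_eq : ∀ t x, β * pdt u t x - κ * pdtt u t x - pdxx u t x
        = u t x * (ru x - γu x * (u t x + v t x)) + μ x * (v t x - u t x))
    (hv_eq : ∀ t x, β * pdt v t x - κ * pdtt v t x - pdxx v t x
        = v t x * (rv x - γv x * (u t x + v t x)) + μ x * (u t x - v t x))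
    -- the positive lower bound assumption
    (h_inf : ∃ δ > (0:ℝ), ∀ t : ℝ, ∀ x ∈ Ioo (-b) b, δ ≤ u t x ∧ δ ≤ v t x) :
    ∀ t : ℝ, ∀ x ∈ Ioo (-b) b,
      min 1 (min (μ0 / (2 * γinfty)) (-lam1b / (2 * (1 + 2 * Cb) * γinfty))) * φb x ≤ u t x ∧
      min 1 (min (μ0 / (2 * γinfty)) (-lam1b / (2 * (1 + 2 * Cb) * γinfty))) * ψb x ≤ v t x := by
  obtain ⟨δ, hδpos, hδinf⟩ := h_inf
  set α₀ := min 1 (min (μ0 / (2 * γinfty)) (-lam1b / (2 * (1 + 2 * Cb) * γinfty))) with hα₀def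
  have hγpos : 0 < γinfty := lt_of_lt_of_le (hγu_pos 0) (hγ_le 0).1
  have hb0 : (0:ℝ) ∈ Ioo (-b) b := ⟨by linarith, hb⟩
  have hCb1 : 1 ≤ Cb := by
    have hmem : max (φb 0 / ψb 0) (ψb 0 / φb 0)
        ∈ {r : ℝ | ∃ x ∈ Ioo (-b) b, r = max (φb x / ψb x) (ψb x / φb x)} := ⟨0, hb0, rfl⟩
    have h1 : 1 ≤ max (φb 0 / ψb 0) (ψb 0 / φb 0) := by
      rcases le_total (φb 0) (ψb 0) with h | h
      · exact le_max_of_le_right ((one_le_div (hφb_pos 0 hb0)).mpr h)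
      · exact le_max_of_le_left ((one_le_div (hψb_pos 0 hb0)).mpr h)
    exact le_trans h1 (hCb.1 hmem)
  have hden : 0 < 2 * (1 + 2 * Cb) * γinfty := by nlinarith
  have hα₀pos : 0 < α₀ := by
    apply lt_min one_pos
    apply lt_min (by positivity)
    exact div_pos (by linarith) hden
  have hα₀1 : α₀ ≤ 1 := min_le_left _ _
  have hα₀μ : γinfty * α₀ ≤ μ0 / 2 := by
    have h1 : α₀ ≤ μ0 / (2 * γinfty) := le_trans (min_le_right _ _) (min_le_left _ _)
    rw [le_div_iff₀ (by positivity)] at h1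
    nlinarith
  have hα₀lam : 2 * (γinfty * α₀) ≤ -lam1b / 3 := by
    have h1 : α₀ ≤ -lam1b / (2 * (1 + 2 * Cb) * γinfty) := le_trans (min_le_right _ _) (min_le_right _ _)
    rw [le_div_iff₀ hden] at h1
    rw [le_div_iff₀ (by norm_num : (0:ℝ) < 3)]
    nlinarith [mul_nonneg (mul_nonneg hα₀pos.le hγpos.le) (by linarith : (0:ℝ) ≤ 2 * Cb - 2)]
  -- bounds on eigenfunctions
  have hφ01 : ∀ x ∈ Icc (-b) b, 0 ≤ φb x ∧ φb x ≤ 1 := by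
    intro x hx
    constructor
    · rcases eq_or_lt_of_le hx.1 with h | h
      · rw [← h, hφb_bc.1]
      · rcases eq_or_lt_of_le hx.2 with h2 | h2
        · rw [h2, hφb_bc.2]
        · exact (hφb_pos x ⟨h, h2⟩).le
    · have hbdd : BddAbove (φb '' Icc (-b) b) :=
        (isCompact_Icc.image_of_continuousOn hφb_cont).bddAbove
      calc φb x ≤ sSup (φb '' Icc (-b) b) := le_csSup hbdd ⟨x, hx, rfl⟩
        _ ≤ max (sSup (φb '' Icc (-b) b)) (sSup (ψb '' Icc (-b) b)) := le_max_left _ _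
        _ = 1 := hΦb_norm
  have hψ01 : ∀ x ∈ Icc (-b) b, 0 ≤ ψb x ∧ ψb x ≤ 1 := by
    intro x hx
    constructor
    · rcases eq_or_lt_of_le hx.1 with h | h
      · rw [← h, hψb_bc.1]
      · rcases eq_or_lt_of_le hx.2 with h2 | h2
        · rw [h2, hψb_bc.2]
        · exact (hψb_pos x ⟨h, h2⟩).le
    · have hbdd : BddAbove (ψb '' Icc (-b) b) :=
        (isCompact_Icc.image_of_continuousOn hψb_cont).bddAbove
      calc ψb x ≤ sSup (ψb '' Icc (-b) b) := le_csSup hbdd ⟨x, hx, rfl⟩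
        _ ≤ max (sSup (φb '' Icc (-b) b)) (sSup (ψb '' Icc (-b) b)) := le_max_right _ _
        _ = 1 := hΦb_norm
  -- coefficient bounds
  obtain ⟨M1, hM1p, hM1⟩ := per_bound hL hru.continuous hru_per
  obtain ⟨M2, hM2p, hM2⟩ := per_bound hL hrv.continuous hrv_per
  obtain ⟨M3, hM3p, hM3⟩ := per_bound hL hμ.continuous hμ_per
  set Mr := M1 + M2 + M3 with hMrdef
  have hMrpos : 0 < Mr := by positivity
  have hruMr : ∀ x, |ru x| ≤ Mr := fun x => le_trans (hM1 x) (by linarith)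
  have hrvMr : ∀ x, |rv x| ≤ Mr := fun x => le_trans (hM2 x) (by linarith)
  have hμMr : ∀ x, μ x ≤ Mr := fun x => le_trans (le_abs_self _) (le_trans (hM3 x) (by linarith))
  -- boundary values
  have bdry : ∀ f : ℝ → ℝ, Continuous f → (∀ x ∈ Ioo (-b) b, δ ≤ f x) →
      δ ≤ f (-b) ∧ δ ≤ f b := by
    intro f hf hfin
    constructor
    · have htd : Tendsto f (nhdsWithin (-b) (Ioi (-b))) (nhds (f (-b))) :=
        hf.continuousAt.continuousWithinAt
      refine ge_of_tendsto htd ?_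
      refine Filter.eventually_of_mem (Ioo_mem_nhdsGT_of_mem (show -b ∈ Ico (-b) b from ⟨le_refl _, by linarith⟩)) ?_
      exact fun x hx => hfin x hx
    · have htd : Tendsto f (nhdsWithin b (Iio b)) (nhds (f b)) :=
        hf.continuousAt.continuousWithinAt
      refine ge_of_tendsto htd ?_
      refine Filter.eventually_of_mem (Ioo_mem_nhdsLT_of_mem (show b ∈ Ioc (-b) b from ⟨by linarith, le_refl _⟩)) ?_
      exact fun x hx => hfin x hx
  have hu_bd : ∀ t : ℝ, δ ≤ u t (-b) ∧ δ ≤ u t b :=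
    fun t => bdry (u t) (slice_x u hu_reg t).continuous (fun x hx => (hδinf t x hx).1)
  have hv_bd : ∀ t : ℝ, δ ≤ v t (-b) ∧ δ ≤ v t b :=
    fun t => bdry (v t) (slice_x v hv_reg t).continuous (fun x hx => (hδinf t x hx).2)
  -- constants
  set δ' := min δ α₀ with hδ'def
  have hδ'pos : 0 < δ' := lt_min hδpos hα₀pos
  have hδ'δ : δ' ≤ δ := min_le_left _ _
  have hδ'α₀ : δ' ≤ α₀ := min_le_right _ _
  set A := |β| + κ + 3 * Mr + 1 with hAdef
  have hApos : 0 < A := by positivity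
  set ε₀ := (-lam1b) * δ' / (3 * A) with hε₀def
  have hε₀pos : 0 < ε₀ := div_pos (mul_pos (by linarith) hδ'pos) (by positivity)
  have hfinal₀ : (|β| + κ) * ε₀ + 3 * Mr * ε₀ < 2/3 * (-lam1b) * δ' := by
    have h1 : ε₀ * (3 * A) = (-lam1b) * δ' := by
      rw [hε₀def]; field_simp
    nlinarith [hε₀pos, mul_pos (show (0:ℝ) < -lam1b by linarith) hδ'pos]
  set P : ℝ → Prop := fun a => ∀ t : ℝ, ∀ x ∈ Ioo (-b) b, a * φb x ≤ u t x ∧ a * ψb x ≤ v t x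
    with hPdef
  have base : P δ' := by
    intro t x hx
    have hφ := hφ01 x (Ioo_subset_Icc_self hx)
    have hψ := hψ01 x (Ioo_subset_Icc_self hx)
    have hδx := hδinf t x hx
    constructor
    · nlinarith [hφ.1, hφ.2, hδ'pos]
    · nlinarith [hψ.1, hψ.2, hδ'pos]
  have key : ∀ a, 0 < a → P a → P (min (a + ε₀) α₀) := by
    intro a ha hPa
    set α' := min (a + ε₀) α₀ with hα'def
    have hα'pos : 0 < α' := lt_min (by linarith) hα₀pos
    have hα'le : α' ≤ α₀ := min_le_right _ _
    have hα'a : α' ≤ a + ε₀ := min_le_left _ _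
    have hA1' : γinfty * α' ≤ μ0 / 2 :=
      le_trans (mul_le_mul_of_nonneg_left hα'le hγpos.le) hα₀μ
    have hA2' : 2 * (γinfty * α') ≤ -lam1b / 3 := by
      have := mul_le_mul_of_nonneg_left hα'le hγpos.le
      linarith
    by_contra hcon
    simp only [hPdef, not_forall, Classical.not_imp, not_and_or, not_le] at hcon
    obtain ⟨t₁, x₁, hx₁, hviol⟩ := hcon
    set m₁ := min (u t₁ x₁ - α' * φb x₁) (v t₁ x₁ - α' * ψb x₁) with hm₁def
    have hm₁neg : m₁ < 0 := by
      rcases hviol with h | h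
      · exact lt_of_le_of_lt (min_le_left _ _) (by linarith)
      · exact lt_of_le_of_lt (min_le_right _ _) (by linarith)
    -- global lower bound for w and z on the closed strip
    have hlow : ∀ t : ℝ, ∀ x ∈ Icc (-b) b,
        -ε₀ ≤ u t x - α' * φb x ∧ -ε₀ ≤ v t x - α' * ψb x := by
      intro t x hx
      rcases eq_or_lt_of_le hx.1 with h | h
      · rw [← h]
        rw [hφb_bc.1, hψb_bc.1]
        constructor <;> [linarith [(hu_bd t).1]; linarith [(hv_bd t).1]]
      · rcases eq_or_lt_of_le hx.2 with h2 | h2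
        · rw [h2]
          rw [hφb_bc.2, hψb_bc.2]
          constructor <;> [linarith [(hu_bd t).2]; linarith [(hv_bd t).2]]
        · have hP := hPa t x ⟨h, h2⟩
          have hφ := hφ01 x hx
          have hψ := hψ01 x hx
          constructor
          · nlinarith [mul_nonneg (by linarith : (0:ℝ) ≤ ε₀ - (α' - a)) hφ.1,
              mul_nonneg hε₀pos.le (by linarith : (0:ℝ) ≤ 1 - φb x)]
          · nlinarith [mul_nonneg (by linarith : (0:ℝ) ≤ ε₀ - (α' - a)) hψ.1,
              mul_nonneg hε₀pos.le (by linarith : (0:ℝ) ≤ 1 - ψb x)]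
    have hm₁low : -ε₀ ≤ m₁ := by
      have := hlow t₁ x₁ (Ioo_subset_Icc_self hx₁)
      exact le_min this.1 this.2
    set σ := -m₁ / 2 with hσdef
    have hσpos : 0 < σ := by simp only [hσdef]; linarith
    have hσε : σ ≤ ε₀ := by simp only [hσdef]; linarith
    obtain ⟨hg1, hg2, hg', hg'', hgnn, hgt₁, hgcoer, hgcont⟩ := glem σ t₁ hσpos.le
    set g := fun t => σ * Real.log (Real.cosh (t - t₁)) with hgdef
    set T := (ε₀ + 1) / σ + Real.log 2 with hTdef
    have hTpos : 0 < T := by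
      have h1 : 0 < (ε₀ + 1) / σ := by positivity
      have h2 := Real.log_nonneg (by norm_num : (1:ℝ) ≤ 2)
      simp only [hTdef]; linarith
    have hgT : ∀ t : ℝ, t = t₁ - T ∨ t = t₁ + T → ε₀ + 1 ≤ g t := by
      intro t htT
      have habs : |t - t₁| = T := by
        rcases htT with h | h <;> rw [h] <;>
          simp [abs_of_nonneg hTpos.le, abs_of_nonpos (by linarith : t₁ - T - t₁ ≤ 0)]
      have h1 := hgcoer t
      have h2 : σ * (|t - t₁| - Real.log 2) = ε₀ + 1 := by
        rw [habs, hTdef]; field_simp; ring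
      simp only [hgdef]; linarith
    set Q : Set (ℝ × ℝ) := Icc (t₁ - T) (t₁ + T) ×ˢ Icc (-b) b with hQdef
    have hQc : IsCompact Q := isCompact_Icc.prod isCompact_Icc
    have hQne : ((t₁, x₁) : ℝ × ℝ) ∈ Q :=
      ⟨⟨by linarith, by linarith⟩, Ioo_subset_Icc_self hx₁⟩
    have hwcont : ContinuousOn (fun p : ℝ × ℝ => u p.1 p.2 - α' * φb p.2) Q := by
      apply ContinuousOn.sub
      · exact (hu_reg.continuous.comp (continuous_id)).continuousOn
      · exact continuousOn_const.mul
          (hφb_cont.comp continuous_snd.continuousOn (fun p hp => hp.2))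
    have hzcont : ContinuousOn (fun p : ℝ × ℝ => v p.1 p.2 - α' * ψb p.2) Q := by
      apply ContinuousOn.sub
      · exact (hv_reg.continuous.comp (continuous_id)).continuousOn
      · exact continuousOn_const.mul
          (hψb_cont.comp continuous_snd.continuousOn (fun p hp => hp.2))
    have hcont : ContinuousOn (fun p : ℝ × ℝ =>
        min (u p.1 p.2 - α' * φb p.2) (v p.1 p.2 - α' * ψb p.2) + g p.1) Q :=
      (hwcont.inf hzcont).add ((hgcont.comp continuous_fst).continuousOn)
    obtain ⟨p₀, hp₀Q, hp₀min⟩ := hQc.exists_isMinOn ⟨(t₁, x₁), hQne⟩ hcont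
    obtain ⟨t₀, x₀⟩ := p₀
    have hmin' := isMinOn_iff.mp hp₀min
    have hval : min (u t₀ x₀ - α' * φb x₀) (v t₀ x₀ - α' * ψb x₀) + g t₀ ≤ m₁ := by
      have h1 := hmin' (t₁, x₁) hQne
      have h2 : g t₁ = 0 := hgt₁
      simp only at h1
      linarith [h1]
    have hgnn₀ : 0 ≤ g t₀ := hgnn t₀
    have hminval : min (u t₀ x₀ - α' * φb x₀) (v t₀ x₀ - α' * ψb x₀) ≤ m₁ := by linarith
    have hx₀ : x₀ ∈ Ioo (-b) b := by
      have hx₀I : x₀ ∈ Icc (-b) b := hp₀Q.2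
      rcases eq_or_lt_of_le hx₀I.1 with h | h
      · exfalso
        rw [← h] at hminval
        rw [hφb_bc.1, hψb_bc.1] at hminval
        have h1 := (hu_bd t₀).1
        have h2 := (hv_bd t₀).1
        have := le_min (by linarith : δ ≤ u t₀ (-b) - α' * 0) (by linarith : δ ≤ v t₀ (-b) - α' * 0)
        linarith
      · rcases eq_or_lt_of_le hx₀I.2 with h2 | h2
        · exfalso
          rw [h2] at hminval
          rw [hφb_bc.2, hψb_bc.2] at hminval
          have hb1 := (hu_bd t₀).2
          have hb2 := (hv_bd t₀).2
          have := le_min (by linarith : δ ≤ u t₀ b - α' * 0) (by linarith : δ ≤ v t₀ b - α' * 0)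
          linarith
        · exact ⟨h, h2⟩
    have ht₀ : t₀ ∈ Ioo (t₁ - T) (t₁ + T) := by
      have ht₀I : t₀ ∈ Icc (t₁ - T) (t₁ + T) := hp₀Q.1
      have hlow₀ := hlow t₀ x₀ hp₀Q.2
      have hminlow : -ε₀ ≤ min (u t₀ x₀ - α' * φb x₀) (v t₀ x₀ - α' * ψb x₀) :=
        le_min hlow₀.1 hlow₀.2
      rcases eq_or_lt_of_le ht₀I.1 with h | h
      · exfalso
        have := hgT t₀ (Or.inl h.symm)
        linarith
      · rcases eq_or_lt_of_le ht₀I.2 with h2 | h2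
        · exfalso
          have := hgT t₀ (Or.inr h2)
          linarith
        · exact ⟨h, h2⟩
    have hUδ : δ' ≤ u t₀ x₀ := le_trans hδ'δ (hδinf t₀ x₀ hx₀).1
    have hVδ : δ' ≤ v t₀ x₀ := le_trans hδ'δ (hδinf t₀ x₀ hx₀).2
    have hfinalσ : (|β| + κ) * σ + 3 * Mr * ε₀ < 2/3 * (-lam1b) * δ' := by
      have := mul_le_mul_of_nonneg_left hσε (by positivity : (0:ℝ) ≤ |β| + κ)
      linarith
    have hlow₀ := hlow t₀ x₀ hp₀Q.2
    rcases le_total (u t₀ x₀ - α' * φb x₀) (v t₀ x₀ - α' * ψb x₀) with hwz | hwz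
    · -- contact for u
      have hminW : IsMinOn (fun p : ℝ × ℝ => u p.1 p.2 - α' * φb p.2 + g p.1) Q (t₀, x₀) := by
        rw [isMinOn_iff]
        intro q hq
        have h1 := hmin' q hq
        have h2 : min (u t₀ x₀ - α' * φb x₀) (v t₀ x₀ - α' * ψb x₀)
            = u t₀ x₀ - α' * φb x₀ := min_eq_left hwz
        have h3 : min (u q.1 q.2 - α' * φb q.2) (v q.1 q.2 - α' * ψb q.2)
            ≤ u q.1 q.2 - α' * φb q.2 := min_le_left _ _
        simp only at h1 ⊢
        linarith
      have hkey := contact b lam1b σ α' κ β t₁ T t₀ x₀ u v φb ψb ru γu μ hκ hα'pos.le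
        hu_reg hφb_reg hx₀ ht₀ (hu_eq t₀ x₀) (hφb_eq x₀ hx₀) g hg1 hg2 hg' hg'' hminW
      have hwneg : u t₀ x₀ - α' * φb x₀ < 0 := by
        rw [min_eq_left hwz] at hminval
        linarith
      exact scalar_contra (u t₀ x₀) (v t₀ x₀) (φb x₀) (ψb x₀) (ru x₀) (γu x₀) (μ x₀)
        lam1b μ0 γinfty Mr δ' ε₀ σ α' (|β| + κ)
        hlam1b hμ0 hγpos hMrpos hδ'pos hε₀pos.le hσpos.le (by positivity) hα'pos
        hA1' hA2' (hφb_pos x₀ hx₀) (hψb_pos x₀ hx₀)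
        (hφ01 x₀ (Ioo_subset_Icc_self hx₀)).2 (hψ01 x₀ (Ioo_subset_Icc_self hx₀)).2
        (hμ0_le x₀) (hμMr x₀) (hruMr x₀) (hγu_pos x₀) (hγ_le x₀).1
        (h_pos t₀ x₀).1 (h_pos t₀ x₀).2 hUδ hwneg hlow₀.1 hwz hkey hfinalσ
    · -- contact for v
      have hminW : IsMinOn (fun p : ℝ × ℝ => v p.1 p.2 - α' * ψb p.2 + g p.1) Q (t₀, x₀) := by
        rw [isMinOn_iff]
        intro q hq
        have h1 := hmin' q hq
        have h2 : min (u t₀ x₀ - α' * φb x₀) (v t₀ x₀ - α' * ψb x₀)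
            = v t₀ x₀ - α' * ψb x₀ := min_eq_right hwz
        have h3 : min (u q.1 q.2 - α' * φb q.2) (v q.1 q.2 - α' * ψb q.2)
            ≤ v q.1 q.2 - α' * ψb q.2 := min_le_right _ _
        simp only at h1 ⊢
        linarith
      have hkey := contact b lam1b σ α' κ β t₁ T t₀ x₀ v u ψb φb rv γv μ hκ hα'pos.le
        hv_reg hψb_reg hx₀ ht₀
        (by rw [add_comm (v t₀ x₀) (u t₀ x₀)]; exact hv_eq t₀ x₀) (hψb_eq x₀ hx₀) g hg1 hg2 hg' hg'' hminW
      have hwneg : v t₀ x₀ - α' * ψb x₀ < 0 := by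
        rw [min_eq_right hwz] at hminval
        linarith
      exact scalar_contra (v t₀ x₀) (u t₀ x₀) (ψb x₀) (φb x₀) (rv x₀) (γv x₀) (μ x₀)
        lam1b μ0 γinfty Mr δ' ε₀ σ α' (|β| + κ)
        hlam1b hμ0 hγpos hMrpos hδ'pos hε₀pos.le hσpos.le (by positivity) hα'pos
        hA1' hA2' (hψb_pos x₀ hx₀) (hφb_pos x₀ hx₀)
        (hψ01 x₀ (Ioo_subset_Icc_self hx₀)).2 (hφ01 x₀ (Ioo_subset_Icc_self hx₀)).2
        (hμ0_le x₀) (hμMr x₀) (hrvMr x₀) (hγv_pos x₀) (hγ_le x₀).2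
        (h_pos t₀ x₀).2 (h_pos t₀ x₀).1 hVδ hwneg hlow₀.2 hwz hkey hfinalσ
  -- iterate
  have iter : ∀ n : ℕ, P (min (δ' + n * ε₀) α₀) := by
    intro n
    induction n with
    | zero => simpa [min_eq_left hδ'α₀] using base
    | succ n ih =>
      have hpos : 0 < min (δ' + n * ε₀) α₀ := by
        apply lt_min _ hα₀pos
        have : (0:ℝ) ≤ (n:ℝ) * ε₀ := by positivity
        linarith
      have hstep := key _ hpos ih
      have heq : min (min (δ' + n * ε₀) α₀ + ε₀) α₀ = min (δ' + (n + 1 : ℕ) * ε₀) α₀ := by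
        rcases le_total (δ' + n * ε₀) α₀ with h | h
        · rw [min_eq_left h]
          congr 1
          push_cast
          ring
        · rw [min_eq_right h, min_eq_right (by linarith), min_eq_right]
          push_cast
          nlinarith [hε₀pos]
      rwa [heq] at hstep
  obtain ⟨n, hn⟩ := exists_nat_ge ((α₀ - δ') / ε₀)
  have hfin : α₀ ≤ δ' + n * ε₀ := by
    rw [div_le_iff₀ hε₀pos] at hn
    linarith
  have := iter n
  rw [min_eq_right hfin] at this
  exact this
end

section
/- Let κ ≥ 0, β ≥ 0, and let (u,v) be a classical positive solution on ℝ² of β u_t - κ u_tt - u_xx = u(r_u - γ_u(u+v)) + μ(v - u), β v_t - κ v_tt - v_xx = v(r_v - γ_v(u+v)) + μ(u - v). Set α₀ := min(1, -λ₁^b/(2(1+2C^b)γ^∞), μ⁰/(2γ^∞)) > 0. If 0 < α < α₀ and α φ^b(x) < u(0,x) and α ψ^b(x) < v(0,x) for all x ∈ (-b,b), then for all t > 0 and all x ∈ (-b,b), α φ^b(x) ≤ u(t,x) and α ψ^b(x) ≤ v(t,x). -/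
open Set

open Filter

lemma second_deriv_nonneg_of_isLocalMin {g : ℝ → ℝ} {a : ℝ}
    (h1 : ∀ᶠ x in nhds a, DifferentiableAt ℝ g x)
    (h2 : DifferentiableAt ℝ (deriv g) a)
    (hm : IsLocalMin g a) : 0 ≤ deriv (deriv g) a := by
  by_contra hneg
  push_neg at hneg
  have hd0 : deriv g a = 0 := hm.deriv_eq_zero
  have hslope : Tendsto (slope (deriv g) a) (nhdsWithin a {a}ᶜ) (nhds (deriv (deriv g) a)) :=
    hasDerivAt_iff_tendsto_slope.1 h2.hasDerivAt
  have hev : ∀ᶠ x in nhdsWithin a {a}ᶜ, slope (deriv g) a x < deriv (deriv g) a / 2 :=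
    hslope.eventually_lt_const (by linarith)
  rw [eventually_nhdsWithin_iff] at hev
  have hall : ∀ᶠ x in nhds a, (x ∈ ({a}ᶜ : Set ℝ) → slope (deriv g) a x < deriv (deriv g) a / 2)
      ∧ DifferentiableAt ℝ g x ∧ g a ≤ g x := hev.and (h1.and hm)
  rw [Metric.eventually_nhds_iff] at hall
  obtain ⟨ε, hε, hP⟩ := hall
  have hmem : ∀ x ∈ Icc a (a + ε/2), dist x a < ε := by
    intro x hx
    rw [Real.dist_eq, abs_lt]
    constructor <;> [linarith [hx.1]; linarith [hx.2]]
  have hanti : StrictAntiOn g (Icc a (a + ε/2)) := by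
    apply strictAntiOn_of_deriv_neg (convex_Icc _ _)
    · intro x hx
      exact ((hP (hmem x hx)).2.1).continuousAt.continuousWithinAt
    · intro x hx
      rw [interior_Icc] at hx
      have hxa : x ≠ a := ne_of_gt hx.1
      have hs := (hP (hmem x (Ioo_subset_Icc_self hx))).1 hxa
      rw [slope_def_field, hd0] at hs
      have hxa' : 0 < x - a := by linarith [hx.1]
      have : (deriv g x - 0) / (x - a) < deriv (deriv g) a / 2 := hs
      rw [div_lt_iff₀ hxa'] at this
      nlinarith
  have h1 : a ∈ Icc a (a + ε/2) := by constructor <;> linarith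
  have h2 : a + ε/2 ∈ Icc a (a + ε/2) := by constructor <;> linarith
  have := hanti h1 h2 (by linarith)
  have := (hP (hmem _ h2)).2.2
  linarith


lemma contdiff_two_real {f : ℝ → ℝ} (hf : ContDiff ℝ 2 f) :
    Differentiable ℝ f ∧ ContDiff ℝ 1 (deriv f) := by
  have hiff := contDiff_succ_iff_deriv (n := 1) (f := f) (𝕜 := ℝ)
  norm_num at hiff
  exact ⟨(hiff.1 hf).1, (hiff.1 hf).2⟩

lemma aux_cD {tθ D uu c : ℝ} (h2 : uu ≤ tθ * D) (hD0 : 0 ≤ D) (htθ1 : tθ < 1)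
    (hcu : c ≤ uu) : c ≤ D := by nlinarith

lemma aux_pos {a h f c : ℝ} (hc : 0 < c) (hcD : c ≤ a * h * f) (hh0 : 0 ≤ h) (hh1 : h ≤ 1)
    (hf0 : 0 ≤ f) (hf1 : f ≤ 1) (ha : 0 < a) : 0 < h ∧ 0 < f := by
  have h1 : a * h * f ≤ a * h := by
    have := mul_le_mul_of_nonneg_left hf1 (mul_nonneg ha.le hh0)
    simpa using this
  have h3 : a * h * f ≤ a * f := by
    have hah : a * h ≤ a := mul_le_of_le_one_right ha.le hh1
    exact mul_le_mul_of_nonneg_right hah hf0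
  constructor
  · rcases lt_or_ge 0 h with h' | h'
    · exact h'
    · exfalso
      have : a * h ≤ 0 := by nlinarith
      linarith
  · rcases lt_or_ge 0 f with h' | h'
    · exact h'
    · exfalso
      have : a * f ≤ 0 := by nlinarith
      linarith

lemma aux_init {uu tθ q : ℝ} (h2 : uu ≤ tθ * q) (htθ1 : tθ < 1) (hq : 0 < q)
    (hi : q < uu) : False := by nlinarith

lemma aux_rhoH {ρ h a : ℝ} (hρ0 : 0 < ρ) (hρ1 : ρ < 1) (hh0 : 0 < h) (hh1 : h ≤ 1)
    (ha : 0 < a) : (ρ * a) * h ≤ a := by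
  have h1 : ρ * h ≤ 1 := by nlinarith [mul_nonneg hρ0.le (by linarith : (0:ℝ) ≤ 1 - h)]
  nlinarith [mul_nonneg ha.le (by linarith : (0:ℝ) ≤ 1 - ρ * h)]

lemma no_touch {t0 x0 : ℝ}
    (R Γ μ : ℝ → ℝ)
    (b : ℝ) (lam1b : ℝ)
    (Φf Ψf : ℝ → ℝ)
    (hΦ_reg : ContDiffOn ℝ 2 Φf (Ioo (-b) b))
    (hΦ_eq : -(deriv (deriv Φf) x0) - (R x0 - μ x0) * Φf x0 - μ x0 * Ψf x0 = lam1b * Φf x0)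
    (μ0 γinfty α : ℝ) (hμ0_le : μ0 ≤ μ x0)
    (hΓ_pos : 0 < Γ x0) (hΓ_le : Γ x0 ≤ γinfty)
    (hα0 : 0 < α)
    (hαμ : 2 * γinfty * α < μ0)
    (hαlam : 2 * γinfty * α < -lam1b)
    (κ β : ℝ) (hκ : 0 ≤ κ) (hβ : 0 ≤ β)
    (U V : ℝ → ℝ → ℝ)
    (hU_reg : ContDiff ℝ 2 (Function.uncurry U))
    (hV_pos : 0 < V t0 x0)
    (hU_eq : β * pdt U t0 x0 - κ * pdtt U t0 x0 - pdxx U t0 x0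
        = U t0 x0 * (R x0 - Γ x0 * (U t0 x0 + V t0 x0)) + μ x0 * (V t0 x0 - U t0 x0))
    (T : ℝ) (hT : 0 < T)
    (A : ℝ) (hA : 0 < A)
    (ht0 : t0 ∈ Ioo 0 T) (hx0 : x0 ∈ Ioo (-b) b)
    (hΦ0 : 0 < Φf x0) (hΨ0 : 0 < Ψf x0) (hΦ1 : Φf x0 ≤ 1) (hΨ1 : Ψf x0 ≤ 1)
    (hAle : A * (1 - t0 / T) ≤ α)
    (hcomp : ∀ t ∈ Ioo 0 T, ∀ x ∈ Ioo (-b) b,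
      A * (1 - t / T) * Φf x ≤ U t x ∧ A * (1 - t / T) * Ψf x ≤ V t x)
    (htouch : U t0 x0 = A * (1 - t0 / T) * Φf x0) : False := by
  have hH0 : 0 < 1 - t0 / T := by
    have : t0 / T < 1 := (div_lt_one hT).2 ht0.2
    linarith
  have hB0 : 0 < A * (1 - t0 / T) := by positivity
  -- the t-line function
  have hut_reg : ContDiff ℝ 2 (fun t' => U t' x0) := hU_reg.comp (contDiff_id.prodMk contDiff_const)
  obtain ⟨hutd, hutd'⟩ := contdiff_two_real hut_reg
  have hg1deriv : ∀ t', HasDerivAt (fun t' => U t' x0 - A * (1 - t' / T) * Φf x0)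
      (deriv (fun t' => U t' x0) t' + A * Φf x0 / T) t' := by
    intro t'
    have h1 : HasDerivAt (fun t' : ℝ => A * (1 - t' / T) * Φf x0) (A * (-(1/T)) * Φf x0) t' := by
      have : HasDerivAt (fun t' : ℝ => 1 - t' / T) (-(1/T)) t' := by
        simpa using ((hasDerivAt_id t').div_const T).const_sub 1
      exact (this.const_mul A).mul_const _
    have h2 : HasDerivAt (fun t' => U t' x0) (deriv (fun t' => U t' x0) t') t' :=
      (hutd t').hasDerivAt
    have := h2.sub h1
    rw [show deriv (fun t' => U t' x0) t' + A * Φf x0 / T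
        = deriv (fun t' => U t' x0) t' - A * (-(1/T)) * Φf x0 by ring]
    exact this
  have hg1min : IsLocalMin (fun t' => U t' x0 - A * (1 - t' / T) * Φf x0) t0 := by
    filter_upwards [Ioo_mem_nhds ht0.1 ht0.2] with t' ht'
    have := (hcomp t' ht' x0 hx0).1
    show U t0 x0 - A * (1 - t0 / T) * Φf x0 ≤ _
    rw [htouch]
    linarith
  have hpdt : pdt U t0 x0 = -(A * Φf x0 / T) := by
    have h0 : deriv (fun t' => U t' x0) t0 + A * Φf x0 / T = 0 := by
      rw [← (hg1deriv t0).deriv]; exact hg1min.deriv_eq_zero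
    show deriv (fun t' => U t' x0) t0 = _
    linarith
  have hg1dfun : deriv (fun t' => U t' x0 - A * (1 - t' / T) * Φf x0)
      = fun t' => deriv (fun t' => U t' x0) t' + A * Φf x0 / T := by
    funext t'; exact (hg1deriv t').deriv
  have hpdtt : 0 ≤ pdtt U t0 x0 := by
    have h2nd : 0 ≤ deriv (deriv (fun t' => U t' x0 - A * (1 - t' / T) * Φf x0)) t0 := by
      apply second_deriv_nonneg_of_isLocalMin
      · filter_upwards with t'
        exact (hg1deriv t').differentiableAt
      · rw [hg1dfun]
        exact ((hutd'.differentiable one_ne_zero) t0).add_const _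
      · exact hg1min
    rw [hg1dfun, deriv_add_const] at h2nd
    exact h2nd
  -- the x-line function
  have hux_reg : ContDiff ℝ 2 (U t0) := hU_reg.comp (contDiff_const.prodMk contDiff_id)
  obtain ⟨huxd, huxd'⟩ := contdiff_two_real hux_reg
  have hΦd : DifferentiableOn ℝ Φf (Ioo (-b) b) := hΦ_reg.differentiableOn (by norm_num)
  have hΦd' : ContDiffOn ℝ 1 (deriv Φf) (Ioo (-b) b) :=
    hΦ_reg.deriv_of_isOpen isOpen_Ioo (by norm_num)
  have hIoo_mem : Ioo (-b) b ∈ nhds x0 := isOpen_Ioo.mem_nhds hx0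
  have hΦdiff : ∀ y ∈ Ioo (-b) b, DifferentiableAt ℝ Φf y := fun y hy =>
    (hΦd y hy).differentiableAt (isOpen_Ioo.mem_nhds hy)
  have hΦdiff2 : DifferentiableAt ℝ (deriv Φf) x0 :=
    ((hΦd'.differentiableOn one_ne_zero) x0 hx0).differentiableAt hIoo_mem
  have hg2min : IsLocalMin (fun y => U t0 y - A * (1 - t0 / T) * Φf y) x0 := by
    filter_upwards [hIoo_mem] with y hy
    have := (hcomp t0 ht0 y hy).1
    show U t0 x0 - A * (1 - t0 / T) * Φf x0 ≤ _
    rw [htouch]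
    linarith
  have hg2dev : deriv (fun y => U t0 y - A * (1 - t0 / T) * Φf y)
      =ᶠ[nhds x0] fun y => deriv (U t0) y - A * (1 - t0 / T) * deriv Φf y := by
    filter_upwards [hIoo_mem] with y hy
    have h1 : DifferentiableAt ℝ (U t0) y := huxd y
    have h2 : DifferentiableAt ℝ (fun z => A * (1 - t0 / T) * Φf z) y :=
      (hΦdiff y hy).const_mul _
    show deriv (fun z => U t0 z - A * (1 - t0 / T) * Φf z) y = _
    rw [deriv_fun_sub h1 h2, deriv_const_mul _ (hΦdiff y hy)]
  have hg2snd : A * (1 - t0 / T) * deriv (deriv Φf) x0 ≤ pdxx U t0 x0 := by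
    have hder2 : DifferentiableAt ℝ
        (fun y => deriv (U t0) y - A * (1 - t0 / T) * deriv Φf y) x0 :=
      ((huxd'.differentiable one_ne_zero) x0).sub (hΦdiff2.const_mul _)
    have h2nd : 0 ≤ deriv (deriv (fun y => U t0 y - A * (1 - t0 / T) * Φf y)) x0 := by
      apply second_deriv_nonneg_of_isLocalMin
      · filter_upwards [hIoo_mem] with y hy
        exact (huxd y).sub ((hΦdiff y hy).const_mul _)
      · exact hder2.congr_of_eventuallyEq hg2dev
      · exact hg2min
    rw [hg2dev.deriv_eq,
      deriv_fun_sub ((huxd'.differentiable one_ne_zero) x0) (hΦdiff2.const_mul _),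
      deriv_const_mul _ hΦdiff2] at h2nd
    have : pdxx U t0 x0 = deriv (deriv (U t0)) x0 := rfl
    linarith
  -- arithmetic
  have hv0 : A * (1 - t0 / T) * Ψf x0 ≤ V t0 x0 := (hcomp t0 ht0 x0 hx0).2
  have hkey : U t0 x0 * (R x0 - Γ x0 * (U t0 x0 + V t0 x0)) + μ x0 * (V t0 x0 - U t0 x0)
      ≤ A * (1 - t0 / T) * ((R x0 - μ x0) * Φf x0 + μ x0 * Ψf x0 + lam1b * Φf x0) := by
    rw [← hU_eq]
    have e1 : β * pdt U t0 x0 ≤ 0 := by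
      rw [hpdt]
      have h1 : 0 ≤ A * Φf x0 / T := by positivity
      nlinarith
    have e2 : 0 ≤ κ * pdtt U t0 x0 := mul_nonneg hκ hpdtt
    have e3 : -pdxx U t0 x0 ≤ -(A * (1 - t0 / T)) * deriv (deriv Φf) x0 := by linarith
    have e4 : A * (1 - t0 / T) * (-(deriv (deriv Φf) x0))
        = A * (1 - t0 / T) * ((R x0 - μ x0) * Φf x0 + μ x0 * Ψf x0 + lam1b * Φf x0) := by
      have : -(deriv (deriv Φf) x0)
          = (R x0 - μ x0) * Φf x0 + μ x0 * Ψf x0 + lam1b * Φf x0 := by linarith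
      rw [this]
    linarith [e1, e2, e3, e4]
  have hγpos : 0 < γinfty := lt_of_lt_of_le hΓ_pos hΓ_le
  have hγ0 : 0 < 2 * γinfty * α := by positivity
  have hm0 : 0 < μ x0 := by linarith
  set B := A * (1 - t0 / T) with hBdef
  set P := Φf x0
  set S := Ψf x0
  have hBP : B * P ≤ α := by
    have h := mul_le_mul_of_nonneg_left hΦ1 hB0.le
    rw [mul_one] at h
    linarith
  have hBS : B * S ≤ α := by
    have h := mul_le_mul_of_nonneg_left hΨ1 hB0.le
    rw [mul_one] at h
    linarith
  have hγinf0 : 0 ≤ γinfty := le_trans hΓ_pos.le hΓ_le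
  have eγP : Γ x0 * (B * P) ≤ γinfty * α :=
    mul_le_mul hΓ_le hBP (mul_pos hB0 hΦ0).le hγinf0
  have eγS : Γ x0 * (B * S) ≤ γinfty * α :=
    mul_le_mul hΓ_le hBS (mul_pos hB0 hΨ0).le hγinf0
  have e3 : 0 ≤ (μ x0 - Γ x0 * (B * P)) * (V t0 x0 - B * S) :=
    mul_nonneg (by linarith) (by linarith)
  have e5 : B * P * (lam1b + Γ x0 * (B * P) + Γ x0 * (B * S)) < 0 :=
    mul_neg_of_pos_of_neg (mul_pos hB0 hΦ0) (by linarith)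
  rw [htouch] at hkey
  nlinarith [hkey, e3, e5]
/-- a forward-in-time lower estimate in `(-b,b)` for positive entire solutions. -/
theorem stmt16
    (L : ℝ) (hL : 0 < L)
    (ru rv γu γv μ : ℝ → ℝ)
    (hru : ContDiff ℝ (⊤ : ℕ∞) ru) (hrv : ContDiff ℝ (⊤ : ℕ∞) rv)
    (hγu : ContDiff ℝ (⊤ : ℕ∞) γu) (hγv : ContDiff ℝ (⊤ : ℕ∞) γv) (hμ : ContDiff ℝ (⊤ : ℕ∞) μ)
    (hru_per : ∀ x, ru (x + L) = ru x) (hrv_per : ∀ x, rv (x + L) = rv x)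
    (hγu_per : ∀ x, γu (x + L) = γu x) (hγv_per : ∀ x, γv (x + L) = γv x)
    (hμ_per : ∀ x, μ (x + L) = μ x)
    (hγu_pos : ∀ x, 0 < γu x) (hγv_pos : ∀ x, 0 < γv x) (hμ_pos : ∀ x, 0 < μ x)
    -- bounds on the coefficients
    (μ0 γinfty : ℝ) (hμ0 : 0 < μ0) (hμ0_le : ∀ x, μ0 ≤ μ x)
    (hγ_le : ∀ x, γu x ≤ γinfty ∧ γv x ≤ γinfty)
    -- the Dirichlet principal eigenpair on (-b,b)
    (b : ℝ) (hb : 0 < b)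
    (lam1b : ℝ) (hlam1b : lam1b < 0)
    (φb ψb : ℝ → ℝ)
    (hφb_cont : ContinuousOn φb (Icc (-b) b)) (hψb_cont : ContinuousOn ψb (Icc (-b) b))
    (hφb_reg : ContDiffOn ℝ 2 φb (Ioo (-b) b)) (hψb_reg : ContDiffOn ℝ 2 ψb (Ioo (-b) b))
    (hφb_pos : ∀ x ∈ Ioo (-b) b, 0 < φb x) (hψb_pos : ∀ x ∈ Ioo (-b) b, 0 < ψb x)
    (hφb_bc : φb (-b) = 0 ∧ φb b = 0) (hψb_bc : ψb (-b) = 0 ∧ ψb b = 0)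
    (hΦb_norm : max (sSup (φb '' Icc (-b) b)) (sSup (ψb '' Icc (-b) b)) = 1)
    (hφb_eq : ∀ x ∈ Ioo (-b) b,
      -(deriv (deriv φb) x) - (ru x - μ x) * φb x - μ x * ψb x = lam1b * φb x)
    (hψb_eq : ∀ x ∈ Ioo (-b) b,
      -(deriv (deriv ψb) x) - (rv x - μ x) * ψb x - μ x * φb x = lam1b * ψb x)
    -- C^b is the (finite) supremum of the ratios of the eigenfunctions
    (Cb : ℝ)
    (hCb : IsLUB {r : ℝ | ∃ x ∈ Ioo (-b) b, r = max (φb x / ψb x) (ψb x / φb x)} Cb)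
    -- the entire solution, with κ ≥ 0 and β ≥ 0
    (κ β : ℝ) (hκ : 0 ≤ κ) (hβ : 0 ≤ β)
    (u v : ℝ → ℝ → ℝ)
    (hu_reg : ContDiff ℝ 2 (Function.uncurry u)) (hv_reg : ContDiff ℝ 2 (Function.uncurry v))
    (h_pos : ∀ t x, 0 < u t x ∧ 0 < v t x)
    (hu_eq : ∀ t x, β * pdt u t x - κ * pdtt u t x - pdxx u t x
        = u t x * (ru x - γu x * (u t x + v t x)) + μ x * (v t x - u t x))
    (hv_eq : ∀ t x, β * pdt v t x - κ * pdtt v t x - pdxx v t x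
        = v t x * (rv x - γv x * (u t x + v t x)) + μ x * (u t x - v t x))
    -- the threshold α and the initial-time bound
    (α : ℝ) (hα0 : 0 < α)
    (hα : α < min 1 (min (-lam1b / (2 * (1 + 2 * Cb) * γinfty)) (μ0 / (2 * γinfty))))
    (h_init : ∀ x ∈ Ioo (-b) b, α * φb x < u 0 x ∧ α * ψb x < v 0 x) :
    ∀ t > (0:ℝ), ∀ x ∈ Ioo (-b) b, α * φb x ≤ u t x ∧ α * ψb x ≤ v t x := by
  have hbb : -b ≤ b := by linarith
  have hγinf : 0 < γinfty := lt_of_lt_of_le (hγu_pos 0) (hγ_le 0).1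
  have hα1 : α < 1 := lt_of_lt_of_le hα (min_le_left _ _)
  have hα2 : α < -lam1b / (2 * (1 + 2 * Cb) * γinfty) :=
    lt_of_lt_of_le hα ((min_le_right _ _).trans (min_le_left _ _))
  have hα3 : α < μ0 / (2 * γinfty) :=
    lt_of_lt_of_le hα ((min_le_right _ _).trans (min_le_right _ _))
  have h0mem : (0:ℝ) ∈ Ioo (-b) b := by constructor <;> linarith
  have hCb_pos : 0 < Cb := by
    have hφ0 := hφb_pos 0 h0mem
    have hψ0 := hψb_pos 0 h0mem
    have hle := hCb.1 (⟨0, h0mem, rfl⟩ :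
      max (φb 0 / ψb 0) (ψb 0 / φb 0) ∈
        {r : ℝ | ∃ x ∈ Ioo (-b) b, r = max (φb x / ψb x) (ψb x / φb x)})
    have h1 : 0 < φb 0 / ψb 0 := by positivity
    exact lt_of_lt_of_le h1 (le_trans (le_max_left _ _) hle)
  have hαμ : 2 * γinfty * α < μ0 := by
    rw [lt_div_iff₀ (by positivity)] at hα3; linarith
  have hαlam : 2 * γinfty * α < -lam1b := by
    have hd : 0 < 2 * (1 + 2 * Cb) * γinfty := by positivity
    rw [lt_div_iff₀ hd] at hα2
    nlinarith
  -- pointwise bounds on the eigenfunctions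
  have hφ_le1 : ∀ x ∈ Icc (-b) b, φb x ≤ 1 := by
    intro x hx
    have h1 : φb x ≤ sSup (φb '' Icc (-b) b) :=
      le_csSup (isCompact_Icc.image_of_continuousOn hφb_cont).bddAbove ⟨x, hx, rfl⟩
    calc φb x ≤ sSup (φb '' Icc (-b) b) := h1
      _ ≤ max (sSup (φb '' Icc (-b) b)) (sSup (ψb '' Icc (-b) b)) := le_max_left _ _
      _ = 1 := hΦb_norm
  have hψ_le1 : ∀ x ∈ Icc (-b) b, ψb x ≤ 1 := by
    intro x hx
    have h1 : ψb x ≤ sSup (ψb '' Icc (-b) b) :=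
      le_csSup (isCompact_Icc.image_of_continuousOn hψb_cont).bddAbove ⟨x, hx, rfl⟩
    calc ψb x ≤ sSup (ψb '' Icc (-b) b) := h1
      _ ≤ max (sSup (φb '' Icc (-b) b)) (sSup (ψb '' Icc (-b) b)) := le_max_right _ _
      _ = 1 := hΦb_norm
  have hφ_nonneg : ∀ x ∈ Icc (-b) b, 0 ≤ φb x := by
    intro x hx
    rcases eq_or_lt_of_le hx.1 with h | h
    · rw [← h, hφb_bc.1]
    · rcases eq_or_lt_of_le hx.2 with h2 | h2
      · rw [h2, hφb_bc.2]
      · exact (hφb_pos x ⟨h, h2⟩).le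
  have hψ_nonneg : ∀ x ∈ Icc (-b) b, 0 ≤ ψb x := by
    intro x hx
    rcases eq_or_lt_of_le hx.1 with h | h
    · rw [← h, hψb_bc.1]
    · rcases eq_or_lt_of_le hx.2 with h2 | h2
      · rw [h2, hψb_bc.2]
      · exact (hψb_pos x ⟨h, h2⟩).le
  -- continuous extensions of the eigenfunctions
  set Φ : ℝ → ℝ := IccExtend hbb ((Icc (-b) b).restrict φb) with hΦdef
  set Ψ : ℝ → ℝ := IccExtend hbb ((Icc (-b) b).restrict ψb) with hΨdef
  have hΦcont : Continuous Φ := hφb_cont.restrict.Icc_extend'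
  have hΨcont : Continuous Ψ := hψb_cont.restrict.Icc_extend'
  have hΦeq : ∀ x ∈ Icc (-b) b, Φ x = φb x := by
    intro x hx
    rw [hΦdef, IccExtend_of_mem hbb _ hx]
    rfl
  have hΨeq : ∀ x ∈ Icc (-b) b, Ψ x = ψb x := by
    intro x hx
    rw [hΨdef, IccExtend_of_mem hbb _ hx]
    rfl
  have hΦmem : ∀ x, 0 ≤ Φ x ∧ Φ x ≤ 1 := by
    intro x
    have h2 := (projIcc (-b) b hbb x).2
    exact ⟨hφ_nonneg _ h2, hφ_le1 _ h2⟩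
  have hΨmem : ∀ x, 0 ≤ Ψ x ∧ Ψ x ≤ 1 := by
    intro x
    have h2 := (projIcc (-b) b hbb x).2
    exact ⟨hψ_nonneg _ h2, hψ_le1 _ h2⟩
  have hucont : Continuous (Function.uncurry u) := hu_reg.continuous
  have hvcont : Continuous (Function.uncurry v) := hv_reg.continuous
  -- THE STRIP LEMMA
  have strip : ∀ T, 0 < T → ∀ t ∈ Ico 0 T, ∀ x ∈ Ioo (-b) b,
      α * (1 - t / T) * φb x ≤ u t x ∧ α * (1 - t / T) * ψb x ≤ v t x := by
    intro T hT
    by_contra hcon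
    push_neg at hcon
    obtain ⟨tb, htb, xb, hxb, hviol⟩ := hcon
    -- minimum of u, v over the compact rectangle
    have hC : IsCompact (Icc (0:ℝ) T ×ˢ Icc (-b) b) := isCompact_Icc.prod isCompact_Icc
    have hCne : ((0:ℝ),(0:ℝ)) ∈ Icc (0:ℝ) T ×ˢ Icc (-b) b :=
      ⟨mem_Icc.2 ⟨le_refl 0, hT.le⟩, mem_Icc.2 ⟨neg_nonpos.2 hb.le, hb.le⟩⟩
    have hFcont : Continuous (fun p : ℝ×ℝ => min (u p.1 p.2) (v p.1 p.2)) := hucont.min hvcont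
    obtain ⟨pc, hpcC, hpcmin⟩ := hC.exists_isMinOn ⟨_, hCne⟩ hFcont.continuousOn
    set c : ℝ := min (u pc.1 pc.2) (v pc.1 pc.2) with hcdef
    have hc0 : 0 < c := lt_min (h_pos _ _).1 (h_pos _ _).2
    have hcle : ∀ p : ℝ×ℝ, p ∈ Icc (0:ℝ) T ×ˢ Icc (-b) b → c ≤ u p.1 p.2 ∧ c ≤ v p.1 p.2 :=
      fun p hp => ⟨le_trans (hpcmin hp) (min_le_left _ _),
        le_trans (hpcmin hp) (min_le_right _ _)⟩
    -- the ratio at the violation point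
    have hhtb : 0 < 1 - tb / T := by
      have : tb / T < 1 := (div_lt_one hT).2 htb.2
      linarith
    have hΦxb : Φ xb = φb xb := hΦeq xb (Ioo_subset_Icc_self hxb)
    have hΨxb : Ψ xb = ψb xb := hΨeq xb (Ioo_subset_Icc_self hxb)
    have hdenu : 0 < α * (1 - tb / T) * Φ xb := by
      rw [hΦxb]; exact mul_pos (mul_pos hα0 hhtb) (hφb_pos xb hxb)
    have hdenv : 0 < α * (1 - tb / T) * Ψ xb := by
      rw [hΨxb]; exact mul_pos (mul_pos hα0 hhtb) (hψb_pos xb hxb)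
    set θ1 : ℝ×ℝ → ℝ := fun p => u p.1 p.2 / (α * (1 - p.1 / T) * Φ p.2) with hθ1def
    set θ2 : ℝ×ℝ → ℝ := fun p => v p.1 p.2 / (α * (1 - p.1 / T) * Ψ p.2) with hθ2def
    have htθlt : min (θ1 (tb,xb)) (θ2 (tb,xb)) < 1 := by
      rcases lt_or_ge (u tb xb) (α * (1 - tb / T) * φb xb) with h | h
      · apply lt_of_le_of_lt (min_le_left _ _)
        show u tb xb / (α * (1 - tb / T) * Φ xb) < 1
        rw [div_lt_one hdenu, hΦxb]
        exact h
      · have h2 := hviol h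
        apply lt_of_le_of_lt (min_le_right _ _)
        show v tb xb / (α * (1 - tb / T) * Ψ xb) < 1
        rw [div_lt_one hdenv, hΨxb]
        exact h2
    set tθ : ℝ := min (θ1 (tb,xb)) (θ2 (tb,xb)) with htθdef
    have htθ0 : 0 < tθ := lt_min (div_pos (h_pos _ _).1 hdenu) (div_pos (h_pos _ _).2 hdenv)
    -- the touching set K
    set K : Set (ℝ×ℝ) := (Icc (0:ℝ) T ×ˢ Icc (-b) b) ∩
      ({p : ℝ×ℝ | u p.1 p.2 ≤ tθ * (α * (1 - p.1 / T) * Φ p.2)} ∪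
       {p : ℝ×ℝ | v p.1 p.2 ≤ tθ * (α * (1 - p.1 / T) * Ψ p.2)}) with hKdef
    have hcont1 : Continuous (fun p : ℝ×ℝ => α * (1 - p.1 / T) * Φ p.2) :=
      ((continuous_const.mul (continuous_const.sub (continuous_fst.div_const T))).mul
        (hΦcont.comp continuous_snd))
    have hcont2 : Continuous (fun p : ℝ×ℝ => α * (1 - p.1 / T) * Ψ p.2) :=
      ((continuous_const.mul (continuous_const.sub (continuous_fst.div_const T))).mul
        (hΨcont.comp continuous_snd))
    have hKcomp : IsCompact K := hC.inter_right (IsClosed.union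
      (isClosed_le hucont (continuous_const.mul hcont1))
      (isClosed_le hvcont (continuous_const.mul hcont2)))
    have hKne : (tb, xb) ∈ K := by
      refine ⟨⟨Ico_subset_Icc_self htb, Ioo_subset_Icc_self hxb⟩, ?_⟩
      rcases le_total (θ1 (tb,xb)) (θ2 (tb,xb)) with hle | hle
      · left
        show u tb xb ≤ tθ * (α * (1 - tb / T) * Φ xb)
        have he : tθ = θ1 (tb,xb) := min_eq_left hle
        rw [he]
        show u tb xb ≤ u tb xb / (α * (1 - tb / T) * Φ xb) * (α * (1 - tb / T) * Φ xb)
        rw [div_mul_cancel₀ _ (ne_of_gt hdenu)]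
      · right
        show v tb xb ≤ tθ * (α * (1 - tb / T) * Ψ xb)
        have he : tθ = θ2 (tb,xb) := min_eq_right hle
        rw [he]
        show v tb xb ≤ v tb xb / (α * (1 - tb / T) * Ψ xb) * (α * (1 - tb / T) * Ψ xb)
        rw [div_mul_cancel₀ _ (ne_of_gt hdenv)]
    -- any point of K is interior
    have hKgood : ∀ p ∈ K, p.1 ∈ Ioo 0 T ∧ p.2 ∈ Ioo (-b) b := by
      rintro ⟨t', x'⟩ ⟨⟨ht'0, hx'0⟩, hbr⟩
      have ht' : t' ∈ Icc (0:ℝ) T := ht'0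
      have hx' : x' ∈ Icc (-b) b := hx'0
      clear ht'0 hx'0
      have hh0 : 0 ≤ 1 - t' / T := by
        have : t' / T ≤ 1 := (div_le_one hT).2 ht'.2
        linarith
      have hh1 : 1 - t' / T ≤ 1 := by
        have : 0 ≤ t' / T := div_nonneg ht'.1 hT.le
        linarith
      have hcu' := (hcle (t',x') ⟨ht', hx'⟩).1
      have hcv' := (hcle (t',x') ⟨ht', hx'⟩).2
      -- from the branch, the weight is bounded below by c
      have hmain : 0 < 1 - t' / T ∧ x' ∈ Ioo (-b) b := by
        rcases hbr with h | h
        · have h2 : u t' x' ≤ tθ * (α * (1 - t' / T) * Φ x') := h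
          have hΦb0 := (hΦmem x').1
          have hΦb1 := (hΦmem x').2
          have hD0 : 0 ≤ α * (1 - t' / T) * Φ x' :=
            mul_nonneg (mul_nonneg hα0.le hh0) hΦb0
          have hcD : c ≤ α * (1 - t' / T) * Φ x' := aux_cD h2 hD0 htθlt hcu'
          obtain ⟨hhpos, hΦpos⟩ := aux_pos hc0 hcD hh0 hh1 hΦb0 hΦb1 hα0
          refine ⟨hhpos, ?_⟩
          rcases eq_or_lt_of_le hx'.1 with he | hlt
          · exfalso
            have : Φ x' = 0 := by
              rw [← he, hΦeq (-b) ⟨le_refl _, hbb⟩, hφb_bc.1]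
            linarith
          · rcases eq_or_lt_of_le hx'.2 with he2 | hlt2
            · exfalso
              have : Φ x' = 0 := by
                rw [he2, hΦeq b ⟨hbb, le_refl _⟩, hφb_bc.2]
              linarith
            · exact ⟨hlt, hlt2⟩
        · have h2 : v t' x' ≤ tθ * (α * (1 - t' / T) * Ψ x') := h
          have hΨb0 := (hΨmem x').1
          have hΨb1 := (hΨmem x').2
          have hD0 : 0 ≤ α * (1 - t' / T) * Ψ x' :=
            mul_nonneg (mul_nonneg hα0.le hh0) hΨb0
          have hcD : c ≤ α * (1 - t' / T) * Ψ x' := aux_cD h2 hD0 htθlt hcv'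
          obtain ⟨hhpos, hΨpos⟩ := aux_pos hc0 hcD hh0 hh1 hΨb0 hΨb1 hα0
          refine ⟨hhpos, ?_⟩
          rcases eq_or_lt_of_le hx'.1 with he | hlt
          · exfalso
            have : Ψ x' = 0 := by
              rw [← he, hΨeq (-b) ⟨le_refl _, hbb⟩, hψb_bc.1]
            linarith
          · rcases eq_or_lt_of_le hx'.2 with he2 | hlt2
            · exfalso
              have : Ψ x' = 0 := by
                rw [he2, hΨeq b ⟨hbb, le_refl _⟩, hψb_bc.2]
              linarith
            · exact ⟨hlt, hlt2⟩
      obtain ⟨hhpos, hx'I⟩ := hmain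
      have htT : t' < T := by
        by_contra hcontra
        push_neg at hcontra
        have : (1:ℝ) ≤ t' / T := (one_le_div hT).2 hcontra
        linarith
      have ht'0 : 0 < t' := by
        rcases eq_or_lt_of_le ht'.1 with he | hlt
        · exfalso
          have hΦx' : Φ x' = φb x' := hΦeq _ (Ioo_subset_Icc_self hx'I)
          have hΨx' : Ψ x' = ψb x' := hΨeq _ (Ioo_subset_Icc_self hx'I)
          have hφpos := hφb_pos _ hx'I
          have hψpos := hψb_pos _ hx'I
          have hinit := h_init x' hx'I
          rcases hbr with h | h
          · have h2 : u t' x' ≤ tθ * (α * (1 - t' / T) * Φ x') := h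
            rw [← he] at h2
            simp only [zero_div, sub_zero, hΦx', mul_one] at h2
            exact aux_init h2 htθlt (mul_pos hα0 hφpos) hinit.1
          · have h2 : v t' x' ≤ tθ * (α * (1 - t' / T) * Ψ x') := h
            rw [← he] at h2
            simp only [zero_div, sub_zero, hΨx', mul_one] at h2
            exact aux_init h2 htθlt (mul_pos hα0 hψpos) hinit.2
        · exact hlt
      exact ⟨⟨ht'0, htT⟩, hx'I⟩
    -- minimize the ratio over K
    have hθcont : ContinuousOn (fun p : ℝ×ℝ => min (θ1 p) (θ2 p)) K := by
      apply ContinuousOn.inf'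
      · apply ContinuousOn.div hucont.continuousOn hcont1.continuousOn
        rintro ⟨t', x'⟩ hp
        obtain ⟨htI, hxI⟩ := hKgood _ hp
        have h1 : 0 < 1 - t' / T := by
          have : t' / T < 1 := (div_lt_one hT).2 htI.2
          linarith
        have h2 : 0 < Φ x' := by
          rw [hΦeq x' (Ioo_subset_Icc_self hxI)]
          exact hφb_pos _ hxI
        exact ne_of_gt (mul_pos (mul_pos hα0 h1) h2)
      · apply ContinuousOn.div hvcont.continuousOn hcont2.continuousOn
        rintro ⟨t', x'⟩ hp
        obtain ⟨htI, hxI⟩ := hKgood _ hp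
        have h1 : 0 < 1 - t' / T := by
          have : t' / T < 1 := (div_lt_one hT).2 htI.2
          linarith
        have h2 : 0 < Ψ x' := by
          rw [hΨeq x' (Ioo_subset_Icc_self hxI)]
          exact hψb_pos _ hxI
        exact ne_of_gt (mul_pos (mul_pos hα0 h1) h2)
    obtain ⟨p0, hp0K, hp0min⟩ := hKcomp.exists_isMinOn ⟨_, hKne⟩ hθcont
    obtain ⟨ht0I, hx0I⟩ := hKgood _ hp0K
    have hH0 : 0 < 1 - p0.1 / T := by
      have : p0.1 / T < 1 := (div_lt_one hT).2 ht0I.2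
      linarith
    have hH1 : 1 - p0.1 / T ≤ 1 := by
      have : 0 ≤ p0.1 / T := div_nonneg ht0I.1.le hT.le
      linarith
    have hΦ0eq : Φ p0.2 = φb p0.2 := hΦeq _ (Ioo_subset_Icc_self hx0I)
    have hΨ0eq : Ψ p0.2 = ψb p0.2 := hΨeq _ (Ioo_subset_Icc_self hx0I)
    have hΦ0 : 0 < Φ p0.2 := by rw [hΦ0eq]; exact hφb_pos _ hx0I
    have hΨ0 : 0 < Ψ p0.2 := by rw [hΨ0eq]; exact hψb_pos _ hx0I
    have hden0u : 0 < α * (1 - p0.1 / T) * Φ p0.2 := mul_pos (mul_pos hα0 hH0) hΦ0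
    have hden0v : 0 < α * (1 - p0.1 / T) * Ψ p0.2 := mul_pos (mul_pos hα0 hH0) hΨ0
    set ρ : ℝ := min (θ1 p0) (θ2 p0) with hρdef
    have hρ0 : 0 < ρ := lt_min (div_pos (h_pos _ _).1 hden0u) (div_pos (h_pos _ _).2 hden0v)
    have hρtθ : ρ ≤ tθ := hp0min hKne
    have hρ1 : ρ < 1 := lt_of_le_of_lt hρtθ htθlt
    -- the global comparison at level ρ
    have hbound : ∀ t' ∈ Ioo 0 T, ∀ x' ∈ Ioo (-b) b,
        ρ * α * (1 - t' / T) * φb x' ≤ u t' x' ∧ ρ * α * (1 - t' / T) * ψb x' ≤ v t' x' := by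
      intro t' ht' x' hx'
      have hmemC : (t',x') ∈ Icc (0:ℝ) T ×ˢ Icc (-b) b :=
        ⟨⟨ht'.1.le, ht'.2.le⟩, Ioo_subset_Icc_self hx'⟩
      have hh' : 0 < 1 - t' / T := by
        have : t' / T < 1 := (div_lt_one hT).2 ht'.2
        linarith
      have hΦ' : Φ x' = φb x' := hΦeq _ (Ioo_subset_Icc_self hx')
      have hΨ' : Ψ x' = ψb x' := hΨeq _ (Ioo_subset_Icc_self hx')
      have hdu : 0 < α * (1 - t' / T) * Φ x' := by
        rw [hΦ']; exact mul_pos (mul_pos hα0 hh') (hφb_pos _ hx')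
      have hdv : 0 < α * (1 - t' / T) * Ψ x' := by
        rw [hΨ']; exact mul_pos (mul_pos hα0 hh') (hψb_pos _ hx')
      by_cases hmem : (t',x') ∈ K
      · have h1 : ρ ≤ θ1 (t',x') := le_trans (hp0min hmem) (min_le_left _ _)
        have h2 : ρ ≤ θ2 (t',x') := le_trans (hp0min hmem) (min_le_right _ _)
        constructor
        · have h3 : ρ ≤ u t' x' / (α * (1 - t' / T) * Φ x') := h1
          rw [le_div_iff₀ hdu] at h3
          rw [hΦ'] at h3
          calc ρ * α * (1 - t' / T) * φb x' = ρ * (α * (1 - t' / T) * φb x') := by ring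
            _ ≤ u t' x' := h3
        · have h3 : ρ ≤ v t' x' / (α * (1 - t' / T) * Ψ x') := h2
          rw [le_div_iff₀ hdv] at h3
          rw [hΨ'] at h3
          calc ρ * α * (1 - t' / T) * ψb x' = ρ * (α * (1 - t' / T) * ψb x') := by ring
            _ ≤ v t' x' := h3
      · have hnot : ¬(u t' x' ≤ tθ * (α * (1 - t' / T) * Φ x') ∨
            v t' x' ≤ tθ * (α * (1 - t' / T) * Ψ x')) := fun hor => hmem ⟨hmemC, hor⟩
        push_neg at hnot
        constructor
        · have h3 : ρ * (α * (1 - t' / T) * Φ x') ≤ tθ * (α * (1 - t' / T) * Φ x') :=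
            mul_le_mul_of_nonneg_right hρtθ hdu.le
          have h4 := hnot.1
          calc ρ * α * (1 - t' / T) * φb x' = ρ * (α * (1 - t' / T) * φb x') := by ring
            _ = ρ * (α * (1 - t' / T) * Φ x') := by rw [hΦ']
            _ ≤ tθ * (α * (1 - t' / T) * Φ x') := h3
            _ ≤ u t' x' := h4.le
        · have h3 : ρ * (α * (1 - t' / T) * Ψ x') ≤ tθ * (α * (1 - t' / T) * Ψ x') :=
            mul_le_mul_of_nonneg_right hρtθ hdv.le
          have h4 := hnot.2
          calc ρ * α * (1 - t' / T) * ψb x' = ρ * (α * (1 - t' / T) * ψb x') := by ring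
            _ = ρ * (α * (1 - t' / T) * Ψ x') := by rw [hΨ']
            _ ≤ tθ * (α * (1 - t' / T) * Ψ x') := h3
            _ ≤ v t' x' := h4.le
    -- the touching point and the contradiction
    have hAle : (ρ * α) * (1 - p0.1 / T) ≤ α := aux_rhoH hρ0 hρ1 hH0 hH1 hα0
    rcases le_total (θ1 p0) (θ2 p0) with h12 | h12
    · have hρeq : ρ = θ1 p0 := min_eq_left h12
      have htouch : u p0.1 p0.2 = ρ * α * (1 - p0.1 / T) * φb p0.2 := by
        have he : θ1 p0 * (α * (1 - p0.1 / T) * Φ p0.2) = u p0.1 p0.2 :=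
          div_mul_cancel₀ _ (ne_of_gt hden0u)
        rw [← hρeq] at he
        rw [← he, hΦ0eq]
        ring
      exact no_touch ru γu μ b lam1b φb ψb hφb_reg (hφb_eq _ hx0I) μ0 γinfty α (hμ0_le _)
        (hγu_pos _) ((hγ_le _).1) hα0 hαμ hαlam κ β hκ hβ u v hu_reg (h_pos _ _).2 (hu_eq _ _)
        T hT (ρ * α) (mul_pos hρ0 hα0) ht0I hx0I (hφb_pos _ hx0I) (hψb_pos _ hx0I)
        (hφ_le1 _ (Ioo_subset_Icc_self hx0I)) (hψ_le1 _ (Ioo_subset_Icc_self hx0I))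
        hAle (fun t' ht' x' hx' => hbound t' ht' x' hx') htouch
    · have hρeq : ρ = θ2 p0 := min_eq_right h12
      have htouch : v p0.1 p0.2 = ρ * α * (1 - p0.1 / T) * ψb p0.2 := by
        have he : θ2 p0 * (α * (1 - p0.1 / T) * Ψ p0.2) = v p0.1 p0.2 :=
          div_mul_cancel₀ _ (ne_of_gt hden0v)
        rw [← hρeq] at he
        rw [← he, hΨ0eq]
        ring
      have hveq' : β * pdt v p0.1 p0.2 - κ * pdtt v p0.1 p0.2 - pdxx v p0.1 p0.2
          = v p0.1 p0.2 * (rv p0.2 - γv p0.2 * (v p0.1 p0.2 + u p0.1 p0.2))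
            + μ p0.2 * (u p0.1 p0.2 - v p0.1 p0.2) := by
        rw [hv_eq]; ring
      exact no_touch rv γv μ b lam1b ψb φb hψb_reg (hψb_eq _ hx0I) μ0 γinfty α (hμ0_le _)
        (hγv_pos _) ((hγ_le _).2) hα0 hαμ hαlam κ β hκ hβ v u hv_reg (h_pos _ _).1 hveq'
        T hT (ρ * α) (mul_pos hρ0 hα0) ht0I hx0I (hψb_pos _ hx0I) (hφb_pos _ hx0I)
        (hψ_le1 _ (Ioo_subset_Icc_self hx0I)) (hφ_le1 _ (Ioo_subset_Icc_self hx0I))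
        hAle (fun t' ht' x' hx' => ⟨(hbound t' ht' x' hx').2, (hbound t' ht' x' hx').1⟩) htouch
  -- conclusion from the strip lemma
  intro t ht x hx
  have h1 : Filter.Tendsto (fun T : ℝ => t / T) atTop (nhds 0) :=
    Filter.Tendsto.div_atTop tendsto_const_nhds Filter.tendsto_id
  constructor
  · have h2 : Filter.Tendsto (fun T : ℝ => α * (1 - t / T) * φb x) atTop
        (nhds (α * φb x)) := by
      have h3 : Filter.Tendsto (fun T : ℝ => α * (1 - t / T) * φb x) atTop
          (nhds (α * (1 - 0) * φb x)) := ((h1.const_sub 1).const_mul α).mul_const (φb x)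
      simpa using h3
    refine le_of_tendsto h2 ?_
    filter_upwards [Filter.eventually_gt_atTop t, Filter.eventually_gt_atTop 0] with T hTt hT0
    exact (strip T hT0 t ⟨ht.le, hTt⟩ x hx).1
  · have h2 : Filter.Tendsto (fun T : ℝ => α * (1 - t / T) * ψb x) atTop
        (nhds (α * ψb x)) := by
      have h3 : Filter.Tendsto (fun T : ℝ => α * (1 - t / T) * ψb x) atTop
          (nhds (α * (1 - 0) * ψb x)) := ((h1.const_sub 1).const_mul α).mul_const (ψb x)
      simpa using h3
    refine le_of_tendsto h2 ?_
    filter_upwards [Filter.eventually_gt_atTop t, Filter.eventually_gt_atTop 0] with T hTt hT0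
    exact (strip T hT0 t ⟨ht.le, hTt⟩ x hx).2
end
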